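/- arXiv:1804.09486 — 5 statements merged into one kernel-verified Lean document; each statement's English description precedes it below -/
import Mathlib

section
/- Let {E_a} be Kraus operators of a CPTP map E on H_S ⊗ H_B and C ⊆ H_S a subspace with projector P_C. If P_C E_{a;kℓ}† E_{b;mn} P_C = Λ_{akℓ,bmn} P_C for all indices, with Λ a Hermitian matrix in the triple indices, then there exists a CPTP map R_S on H_S such that R := R_S ⊗ id_B satisfies Tr_B{(R∘E)(ρ)} = Tr_B{ρ} for every state ρ supported on C ⊗ H_B. In particular, R_S can be taken with Kraus operators {P_C F_α†/√λ_α} where the F_α arise from diagonalizing Λ. -/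
open Matrix
open scoped BigOperators Kronecker ComplexOrder

/-!
Compressing the Knill–Laflamme condition by `P = P_C` makes `tr P • Λ` the Gram matrix of the
operators `A_p P`, where `A_{(a,k,ℓ)} = E_{a;kℓ}`; so `Λ ≥ 0` and `Λ = U diag(λ) U†`. The rotated
errors `G_α = ∑_p U_{pα} A_p P` satisfy `G_α† G_β = δ_{αβ} λ_α P`, so the `G_α / √λ_α` map the
code isometrically onto mutually orthogonal subspaces spanning the range of the projector
`Q = ∑_α G_α G_α† / λ_α`, which contains the range of every `A_p P`. The operators
`G_α† / √λ_α` together with `1 - Q` form a trace-preserving Kraus family `R_c` with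
`R_c A_p P = μ_{cp} P`. On the bath this reads
`(R_c ⊗ 1) E_a (P ⊗ 1) = P ⊗ w_{ca}`, trace preservation of `E` forces `∑ w_{ca}† w_{ca} = 1`, and
the partial trace of the corrected state becomes `P Tr_B ρ P = Tr_B ρ`.
-/

namespace OSQEC5

/-- Partial trace over the bath factor. -/
noncomputable def trB {dS dB : ℕ}
    (M : Matrix (Fin dS × Fin dB) (Fin dS × Fin dB) ℂ) :
    Matrix (Fin dS) (Fin dS) ℂ :=
  Matrix.of fun i j => ∑ k : Fin dB, M (i, k) (j, k)

/-- Partial matrix element `⟨k|M|ℓ⟩`, a system operator. -/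
def pmel {dS dB : ℕ} (M : Matrix (Fin dS × Fin dB) (Fin dS × Fin dB) ℂ)
    (k ℓ : Fin dB) : Matrix (Fin dS) (Fin dS) ℂ :=
  Matrix.of fun i j => M (i, k) (j, ℓ)

section Recovery

variable {n τ : Type*} [Fintype n] {P : Matrix n n ℂ} {A : τ → Matrix n n ℂ}

theorem sum_star_mul_smul_eq_compression [DecidableEq n] {κ : Type*} [Fintype κ]
    {R : κ → Matrix n n ℂ} {μ : κ → τ → ℂ} (hP : IsStarProjection P) (hR : ∑ c, (R c)ᴴ * R c = 1)
    (hRA : ∀ c p, R c * A p * P = μ c p • P) (p q : τ) :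
    (∑ c, star (μ c p) * μ c q) • P = P * (A p)ᴴ * A q * P := by
  have hPH : Pᴴ = P := hP.isSelfAdjoint
  calc (∑ c, star (μ c p) * μ c q) • P
      = ∑ c, (μ c p • P)ᴴ * (μ c q • P) := by
        rw [Finset.sum_smul]
        refine Finset.sum_congr rfl fun c _ => ?_
        rw [conjTranspose_smul, hPH, smul_mul, mul_smul_comm, smul_smul, hP.isIdempotentElem.eq]
    _ = ∑ c, (R c * A p * P)ᴴ * (R c * A q * P) := by simp only [hRA]
    _ = P * (A p)ᴴ * (∑ c, (R c)ᴴ * R c) * A q * P := by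
        simp only [conjTranspose_mul, hPH, Finset.mul_sum, Finset.sum_mul, mul_assoc]
    _ = P * (A p)ᴴ * A q * P := by rw [hR, mul_one]

variable [Fintype τ]

theorem posSemidef_of_compression {Λ : Matrix τ τ ℂ} (hP : IsStarProjection P) (hP0 : P ≠ 0)
    (hΛ : ∀ p q, P * (A p)ᴴ * A q * P = Λ p q • P) : Λ.PosSemidef := by
  have hPH : Pᴴ = P := hP.isSelfAdjoint
  have hPpsd : P.PosSemidef := by
    simpa only [hPH, hP.isIdempotentElem.eq] using posSemidef_conjTranspose_mul_self P
  have htr : P.trace ≠ 0 := fun h => hP0 (hPpsd.trace_eq_zero_iff.mp h)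
  set B : Matrix (n × n) τ ℂ := of fun ij p => (A p * P) ij.1 ij.2
  -- `Λ` is, up to the factor `tr P`, the Gram matrix of the vectorised operators `A p * P`.
  have hgram : Bᴴ * B = P.trace • Λ := by
    ext p q
    have h : (A p * P)ᴴ * (A q * P) = Λ p q • P := by
      rw [conjTranspose_mul, hPH, ← hΛ]; simp only [mul_assoc]
    rw [Matrix.smul_apply, smul_eq_mul, mul_comm, ← smul_eq_mul, ← trace_smul, ← h, trace,
      mul_apply, Fintype.sum_prod_type, Finset.sum_comm]
    simp only [diag, mul_apply (M := (A p * P)ᴴ), conjTranspose_apply, B, of_apply]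
  rw [← inv_smul_smul₀ htr Λ, ← hgram]
  exact (posSemidef_conjTranspose_mul_self B).smul (inv_nonneg_of_nonneg hPpsd.trace_nonneg)

/-- `F_α P` in the paper's notation, where `F_α = ∑_p U_{pα} A_p` diagonalises the compressed
Gram matrix. -/
def rotatedError (U : Matrix τ τ ℂ) (A : τ → Matrix n n ℂ) (P : Matrix n n ℂ) (α : τ) :
    Matrix n n ℂ :=
  ∑ p, U p α • (A p * P)

variable {U : Matrix τ τ ℂ} {d : τ → ℝ}

theorem conjTranspose_rotatedError_mul [DecidableEq τ] {Λ : Matrix τ τ ℂ}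
    (hP : IsStarProjection P) (hΛ : ∀ p q, P * (A p)ᴴ * A q * P = Λ p q • P)
    (hd : star U * Λ = diagonal (fun α => (d α : ℂ)) * star U) (α q : τ) :
    (rotatedError U A P α)ᴴ * (A q * P) = (d α * star (U q α)) • P := by
  have hPH : Pᴴ = P := hP.isSelfAdjoint
  have h := congrFun (congrFun hd α) q
  rw [mul_apply, diagonal_mul, star_apply] at h
  simp only [star_apply] at h
  rw [← h, rotatedError, conjTranspose_sum, Finset.sum_mul, Finset.sum_smul]
  refine Finset.sum_congr rfl fun p _ => ?_
  rw [conjTranspose_smul, conjTranspose_mul, hPH, smul_mul, mul_smul, ← hΛ]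
  simp only [mul_assoc]

theorem mul_eq_sum_rotatedError [DecidableEq τ] (hU : U * star U = 1) (q : τ) :
    A q * P = ∑ α, star (U q α) • rotatedError U A P α := by
  simp only [rotatedError, Finset.smul_sum, smul_smul]
  rw [Finset.sum_comm]
  simp only [← Finset.sum_smul]
  have h (p : τ) : ∑ α, star (U q α) * U p α = (1 : Matrix τ τ ℂ) p q := by
    rw [← hU, mul_apply]
    exact Finset.sum_congr rfl fun α _ => by rw [star_apply, mul_comm]
  simp only [h, one_apply, ite_smul, one_smul, zero_smul, Finset.sum_ite_eq', Finset.mem_univ,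
    if_true]

theorem rotatedError_mul_self (hP : IsStarProjection P) (α : τ) :
    rotatedError U A P α * P = rotatedError U A P α := by
  simp only [rotatedError, Finset.sum_mul, smul_mul, mul_assoc, hP.isIdempotentElem.eq]

theorem rotatedError_eq_zero [DecidableEq τ] {Λ : Matrix τ τ ℂ}
    (hP : IsStarProjection P) (hΛ : ∀ p q, P * (A p)ᴴ * A q * P = Λ p q • P)
    (hd : star U * Λ = diagonal (fun α => (d α : ℂ)) * star U) {α : τ} (hα : d α = 0) :
    rotatedError U A P α = 0 := by
  refine conjTranspose_mul_self_eq_zero.mp ?_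
  nth_rw 2 [rotatedError]
  simp [Finset.mul_sum, conjTranspose_rotatedError_mul hP hΛ hd, hα]

/-- The paper's recovery Kraus operator `P F_α† / √λ_α`; it vanishes when `λ_α = 0`, since
`(√0)⁻¹ = 0`. -/
noncomputable def recoveryOp (U : Matrix τ τ ℂ) (d : τ → ℝ) (A : τ → Matrix n n ℂ)
    (P : Matrix n n ℂ) (α : τ) : Matrix n n ℂ :=
  (((Real.sqrt (d α))⁻¹ : ℝ) : ℂ) • (rotatedError U A P α)ᴴ

theorem recoveryOp_mul [DecidableEq τ] {Λ : Matrix τ τ ℂ}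
    (hP : IsStarProjection P) (hΛ : ∀ p q, P * (A p)ᴴ * A q * P = Λ p q • P)
    (hd : star U * Λ = diagonal (fun α => (d α : ℂ)) * star U) (α q : τ) :
    recoveryOp U d A P α * A q * P
      = ((((Real.sqrt (d α))⁻¹ : ℝ) : ℂ) * d α * star (U q α)) • P := by
  rw [recoveryOp, smul_mul, smul_mul, mul_assoc, conjTranspose_rotatedError_mul hP hΛ hd,
    smul_smul, mul_assoc]

theorem inv_sqrt_mul_inv_sqrt_smul_rotatedError [DecidableEq τ] {Λ : Matrix τ τ ℂ}
    (hP : IsStarProjection P) (hΛ : ∀ p q, P * (A p)ᴴ * A q * P = Λ p q • P)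
    (hd : star U * Λ = diagonal (fun α => (d α : ℂ)) * star U) {α : τ} (hd0 : 0 ≤ d α) :
    (((Real.sqrt (d α))⁻¹ * (Real.sqrt (d α))⁻¹ * d α : ℝ) : ℂ) • rotatedError U A P α
      = rotatedError U A P α := by
  rcases hd0.eq_or_lt with h | h
  · rw [rotatedError_eq_zero hP hΛ hd h.symm, smul_zero]
  · have hs : Real.sqrt (d α) ≠ 0 := (Real.sqrt_pos.mpr h).ne'
    have h1 : (Real.sqrt (d α))⁻¹ * (Real.sqrt (d α))⁻¹ * d α = 1 := by
      field_simp
      exact (Real.sq_sqrt hd0).symm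
    rw [h1, Complex.ofReal_one, one_smul]

theorem sum_recoveryOp_mul [DecidableEq τ] {Λ : Matrix τ τ ℂ}
    (hP : IsStarProjection P) (hΛ : ∀ p q, P * (A p)ᴴ * A q * P = Λ p q • P)
    (hU : U * star U = 1) (hd : star U * Λ = diagonal (fun α => (d α : ℂ)) * star U)
    (hd0 : ∀ α, 0 ≤ d α) (q : τ) :
    (∑ α, (recoveryOp U d A P α)ᴴ * recoveryOp U d A P α) * (A q * P) = A q * P := by
  calc (∑ α, (recoveryOp U d A P α)ᴴ * recoveryOp U d A P α) * (A q * P)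
      = ∑ α, (recoveryOp U d A P α)ᴴ * (recoveryOp U d A P α * A q * P) := by
        simp only [Finset.sum_mul, mul_assoc]
    _ = ∑ α, star (U q α) • ((((Real.sqrt (d α))⁻¹ * (Real.sqrt (d α))⁻¹ * d α : ℝ) : ℂ)
          • rotatedError U A P α) := by
        refine Finset.sum_congr rfl fun α _ => ?_
        rw [recoveryOp_mul hP hΛ hd, mul_smul_comm, recoveryOp, conjTranspose_smul,
          conjTranspose_conjTranspose, smul_mul, rotatedError_mul_self hP, smul_smul, smul_smul]
        congr 1
        simp only [Complex.ofReal_mul, Complex.star_def, Complex.conj_ofReal]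
        ring
    _ = A q * P := by
        simp only [inv_sqrt_mul_inv_sqrt_smul_rotatedError hP hΛ hd (hd0 _)]
        exact (mul_eq_sum_rotatedError hU q).symm

theorem isStarProjection_sum_recoveryOp [DecidableEq τ] {Λ : Matrix τ τ ℂ}
    (hP : IsStarProjection P) (hΛ : ∀ p q, P * (A p)ᴴ * A q * P = Λ p q • P)
    (hU : U * star U = 1) (hd : star U * Λ = diagonal (fun α => (d α : ℂ)) * star U)
    (hd0 : ∀ α, 0 ≤ d α) :
    IsStarProjection (∑ α, (recoveryOp U d A P α)ᴴ * recoveryOp U d A P α) := by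
  set Q := ∑ α, (recoveryOp U d A P α)ᴴ * recoveryOp U d A P α
  have hQA : ∀ q, Q * (A q * P) = A q * P := sum_recoveryOp_mul hP hΛ hU hd hd0
  have hQR (β : τ) : Q * (recoveryOp U d A P β)ᴴ = (recoveryOp U d A P β)ᴴ := by
    simp only [recoveryOp, conjTranspose_smul, conjTranspose_conjTranspose, rotatedError,
      mul_smul_comm, Finset.mul_sum, hQA]
  refine ⟨?_, isSelfAdjoint_sum _ fun α _ => IsSelfAdjoint.star_mul_self _⟩
  change Q * (∑ α, (recoveryOp U d A P α)ᴴ * recoveryOp U d A P α) = Q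
  simp only [Finset.mul_sum, ← mul_assoc, hQR]
  rfl

theorem sum_option_elim_conjTranspose_mul_self [DecidableEq n] {κ : Type*} [Fintype κ]
    (R : κ → Matrix n n ℂ) (hQ : IsStarProjection (∑ c, (R c)ᴴ * R c)) :
    ∑ c : Option κ, (c.elim (1 - ∑ c, (R c)ᴴ * R c) R)ᴴ * c.elim (1 - ∑ c, (R c)ᴴ * R c) R
      = 1 := by
  have hQ' := hQ.one_sub
  have hQH : (1 - ∑ c, (R c)ᴴ * R c)ᴴ = 1 - ∑ c, (R c)ᴴ * R c := hQ'.isSelfAdjoint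
  rw [Fintype.sum_option, Option.elim_none, hQH, hQ'.isIdempotentElem.eq]
  simp only [Option.elim_some, sub_add_cancel]

theorem exists_recovery [DecidableEq n] {Λ : Matrix τ τ ℂ} (hP : IsStarProjection P)
    (hP0 : P ≠ 0) (hΛ : ∀ p q, P * (A p)ᴴ * A q * P = Λ p q • P) :
    ∃ (κ : Type) (_ : Fintype κ) (R : κ → Matrix n n ℂ) (μ : κ → τ → ℂ),
      ∑ c, (R c)ᴴ * R c = 1 ∧ ∀ c p, R c * A p * P = μ c p • P := by
  classical
  have hΛpsd := posSemidef_of_compression hP hP0 hΛ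
  set u := hΛpsd.isHermitian.eigenvectorUnitary
  set d := hΛpsd.isHermitian.eigenvalues
  have hU : (u : Matrix τ τ ℂ) * star (u : Matrix τ τ ℂ) = 1 := Unitary.coe_mul_star_self u
  have hd : star (u : Matrix τ τ ℂ) * Λ
      = diagonal (fun α => (d α : ℂ)) * star (u : Matrix τ τ ℂ) := by
    have h : star (u : Matrix τ τ ℂ) * Λ * u = diagonal (fun α => (d α : ℂ)) :=
      (Unitary.conjStarAlgAut_star_apply _ _).symm.trans
        hΛpsd.isHermitian.conjStarAlgAut_star_eigenvectorUnitary
    rw [← h, mul_assoc _ (u : Matrix τ τ ℂ), hU, mul_one]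
  set R := recoveryOp (u : Matrix τ τ ℂ) d A P
  set Q := ∑ α, (R α)ᴴ * R α
  have hQ : IsStarProjection Q :=
    isStarProjection_sum_recoveryOp hP hΛ hU hd hΛpsd.eigenvalues_nonneg
  set R' : Option τ → Matrix n n ℂ := fun c => c.elim (1 - Q) R
  set μ' : Option τ → τ → ℂ := fun c q =>
    c.elim 0 fun α => (((Real.sqrt (d α))⁻¹ : ℝ) : ℂ) * d α * star ((u : Matrix τ τ ℂ) q α)
  have hRA (c : Option τ) (q : τ) : R' c * A q * P = μ' c q • P := by
    cases c with
    | none =>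
      change (1 - Q) * A q * P = (0 : ℂ) • P
      rw [zero_smul, mul_assoc, sub_mul, one_mul, sub_eq_zero]
      exact (sum_recoveryOp_mul hP hΛ hU hd hΛpsd.eigenvalues_nonneg q).symm
    | some α => exact recoveryOp_mul hP hΛ hd α q
  let e := (Fintype.equivFin (Option τ)).symm
  refine ⟨Fin (Fintype.card (Option τ)), inferInstance, R' ∘ e, μ' ∘ e, ?_,
    fun c q => hRA (e c) q⟩
  exact (e.sum_comp fun c => (R' c)ᴴ * R' c).trans
    (sum_option_elim_conjTranspose_mul_self R hQ)

end Recovery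

theorem kronecker_sum {l m n p κ : Type*} (A : Matrix l m ℂ) (s : Finset κ)
    (B : κ → Matrix n p ℂ) : A ⊗ₖ ∑ x ∈ s, B x = ∑ x ∈ s, A ⊗ₖ B x := by
  ext
  simp [Matrix.sum_apply, Finset.mul_sum]

section Bath

variable {dS dB : ℕ}

theorem pmel_ext {M N : Matrix (Fin dS × Fin dB) (Fin dS × Fin dB) ℂ}
    (h : ∀ k l, pmel M k l = pmel N k l) : M = N := by
  ext ⟨i, k⟩ ⟨j, l⟩
  exact congrFun (congrFun (h k l) i) j

theorem pmel_sum {κ : Type*} (s : Finset κ)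
    (f : κ → Matrix (Fin dS × Fin dB) (Fin dS × Fin dB) ℂ) (k l : Fin dB) :
    pmel (∑ a ∈ s, f a) k l = ∑ a ∈ s, pmel (f a) k l := by
  ext i j
  simp [pmel, Matrix.sum_apply]

theorem pmel_one (k l : Fin dB) :
    pmel (1 : Matrix (Fin dS × Fin dB) (Fin dS × Fin dB) ℂ) k l = if k = l then 1 else 0 := by
  ext i j
  by_cases h : k = l <;> simp [pmel, one_apply, h, and_comm]

theorem pmel_conjTranspose_mul (M N : Matrix (Fin dS × Fin dB) (Fin dS × Fin dB) ℂ)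
    (k l : Fin dB) : pmel (Mᴴ * N) k l = ∑ m, (pmel M m k)ᴴ * pmel N m l := by
  ext i j
  simp only [pmel, Matrix.sum_apply, mul_apply, conjTranspose_apply, of_apply,
    Fintype.sum_prod_type]
  exact Finset.sum_comm

theorem pmel_kronecker (X : Matrix (Fin dS) (Fin dS) ℂ) (w : Matrix (Fin dB) (Fin dB) ℂ)
    (k l : Fin dB) : pmel (X ⊗ₖ w) k l = w k l • X := by
  ext i j
  simp [pmel, kroneckerMap_apply, mul_comm]

theorem pmel_kronecker_one_mul (X : Matrix (Fin dS) (Fin dS) ℂ)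
    (M : Matrix (Fin dS × Fin dB) (Fin dS × Fin dB) ℂ) (k l : Fin dB) :
    pmel ((X ⊗ₖ (1 : Matrix (Fin dB) (Fin dB) ℂ)) * M) k l = X * pmel M k l := by
  ext i j
  simp [pmel, mul_apply, Fintype.sum_prod_type, one_apply]

theorem pmel_mul_kronecker_one (M : Matrix (Fin dS × Fin dB) (Fin dS × Fin dB) ℂ)
    (X : Matrix (Fin dS) (Fin dS) ℂ) (k l : Fin dB) :
    pmel (M * (X ⊗ₖ (1 : Matrix (Fin dB) (Fin dB) ℂ))) k l = pmel M k l * X := by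
  ext i j
  simp [pmel, mul_apply, Fintype.sum_prod_type, one_apply]

theorem trB_sum {κ : Type*} (s : Finset κ)
    (f : κ → Matrix (Fin dS × Fin dB) (Fin dS × Fin dB) ℂ) :
    trB (∑ x ∈ s, f x) = ∑ x ∈ s, trB (f x) := by
  ext i j
  simp only [trB, Matrix.sum_apply, of_apply]
  exact Finset.sum_comm

theorem trB_eq_sum_pmel (M : Matrix (Fin dS × Fin dB) (Fin dS × Fin dB) ℂ) :
    trB M = ∑ m, pmel M m m := by
  ext i j
  simp [trB, pmel, Matrix.sum_apply]

theorem pmel_one_kronecker_mul (v : Matrix (Fin dB) (Fin dB) ℂ)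
    (M : Matrix (Fin dS × Fin dB) (Fin dS × Fin dB) ℂ) (k l : Fin dB) :
    pmel (((1 : Matrix (Fin dS) (Fin dS) ℂ) ⊗ₖ v) * M) k l = ∑ m, v k m • pmel M m l := by
  ext i j
  simp [pmel, mul_apply, Fintype.sum_prod_type, one_apply, Matrix.sum_apply]

theorem pmel_mul_one_kronecker (M : Matrix (Fin dS × Fin dB) (Fin dS × Fin dB) ℂ)
    (v : Matrix (Fin dB) (Fin dB) ℂ) (k l : Fin dB) :
    pmel (M * ((1 : Matrix (Fin dS) (Fin dS) ℂ) ⊗ₖ v)) k l = ∑ m, v m l • pmel M k m := by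
  ext i j
  simp [pmel, mul_apply, Fintype.sum_prod_type, one_apply, Matrix.sum_apply, mul_comm]

theorem trB_kronecker_one_mul_mul (X Y : Matrix (Fin dS) (Fin dS) ℂ)
    (M : Matrix (Fin dS × Fin dB) (Fin dS × Fin dB) ℂ) :
    trB ((X ⊗ₖ (1 : Matrix (Fin dB) (Fin dB) ℂ)) * M * (Y ⊗ₖ 1)) = X * trB M * Y := by
  simp only [trB_eq_sum_pmel, Finset.mul_sum, Finset.sum_mul, pmel_mul_kronecker_one,
    pmel_kronecker_one_mul]

theorem trB_mul_one_kronecker (M : Matrix (Fin dS × Fin dB) (Fin dS × Fin dB) ℂ)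
    (v : Matrix (Fin dB) (Fin dB) ℂ) :
    trB (M * ((1 : Matrix (Fin dS) (Fin dS) ℂ) ⊗ₖ v)) = trB ((1 ⊗ₖ v) * M) := by
  simp only [trB_eq_sum_pmel, pmel_mul_one_kronecker, pmel_one_kronecker_mul]
  exact Finset.sum_comm

theorem trB_one_kronecker_conj (w : Matrix (Fin dB) (Fin dB) ℂ)
    (M : Matrix (Fin dS × Fin dB) (Fin dS × Fin dB) ℂ) :
    trB (((1 : Matrix (Fin dS) (Fin dS) ℂ) ⊗ₖ w) * M * (1 ⊗ₖ w)ᴴ) = trB ((1 ⊗ₖ (wᴴ * w)) * M) := by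
  rw [conjTranspose_kronecker, conjTranspose_one, trB_mul_one_kronecker, ← mul_assoc,
    ← mul_kronecker_mul, one_mul]

theorem trB_sum_kronecker_conj {κ : Type*} [Fintype κ] (X : Matrix (Fin dS) (Fin dS) ℂ)
    (w : κ → Matrix (Fin dB) (Fin dB) ℂ) (M : Matrix (Fin dS × Fin dB) (Fin dS × Fin dB) ℂ) :
    trB (∑ x, (X ⊗ₖ w x) * M * (X ⊗ₖ w x)ᴴ)
      = X * trB (((1 : Matrix (Fin dS) (Fin dS) ℂ) ⊗ₖ ∑ x, (w x)ᴴ * w x) * M) * Xᴴ := by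
  have hsplit (x : κ) : (X ⊗ₖ w x) * M * (X ⊗ₖ w x)ᴴ
      = (X ⊗ₖ 1) * ((1 ⊗ₖ w x) * M * (1 ⊗ₖ w x)ᴴ) * (Xᴴ ⊗ₖ 1) := by
    have h : X ⊗ₖ w x = (X ⊗ₖ 1) * (1 ⊗ₖ w x) := by rw [← mul_kronecker_mul, mul_one, one_mul]
    rw [h, conjTranspose_mul, conjTranspose_kronecker X, conjTranspose_one]
    simp only [mul_assoc]
  simp only [hsplit, trB_sum, trB_kronecker_one_mul_mul, trB_one_kronecker_conj]
  rw [← Finset.sum_mul, ← Finset.mul_sum, ← trB_sum, ← Finset.sum_mul, kronecker_sum]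

theorem kronecker_one_mul_mul_kronecker_one_eq {R P : Matrix (Fin dS) (Fin dS) ℂ}
    {M : Matrix (Fin dS × Fin dB) (Fin dS × Fin dB) ℂ} {w : Matrix (Fin dB) (Fin dB) ℂ}
    (h : ∀ k l, R * pmel M k l * P = w k l • P) :
    (R ⊗ₖ (1 : Matrix (Fin dB) (Fin dB) ℂ)) * M * (P ⊗ₖ 1) = P ⊗ₖ w :=
  pmel_ext fun k l => by
    rw [pmel_mul_kronecker_one, pmel_kronecker_one_mul, pmel_kronecker, h]

theorem sum_weight_conjTranspose_mul_self {κ ι : Type*} [Fintype κ] [Fintype ι]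
    {P : Matrix (Fin dS) (Fin dS) ℂ} {E : ι → Matrix (Fin dS × Fin dB) (Fin dS × Fin dB) ℂ}
    {R : κ → Matrix (Fin dS) (Fin dS) ℂ} {μ : κ → ι × Fin dB × Fin dB → ℂ}
    (hP : IsStarProjection P) (hP0 : P ≠ 0) (hTP : ∑ a, (E a)ᴴ * E a = 1)
    (hR : ∑ c, (R c)ᴴ * R c = 1) (hRA : ∀ c p, R c * pmel (E p.1) p.2.1 p.2.2 * P = μ c p • P) :
    ∑ x : κ × ι, (of fun k l => μ x.1 (x.2, k, l))ᴴ * of (fun k l => μ x.1 (x.2, k, l)) = 1 := by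
  ext k l
  apply smul_left_injective ℂ hP0
  dsimp only
  calc (∑ x : κ × ι, (of fun k l => μ x.1 (x.2, k, l))ᴴ * of (fun k l => μ x.1 (x.2, k, l))) k l • P
      = ∑ a, ∑ m, (∑ c, star (μ c (a, m, k)) * μ c (a, m, l)) • P := by
        simp only [Matrix.sum_apply, mul_apply, conjTranspose_apply, of_apply,
          Fintype.sum_prod_type, Finset.sum_smul]
        rw [Finset.sum_comm]
        exact Finset.sum_congr rfl fun a _ => Finset.sum_comm
    _ = ∑ a, ∑ m, P * (pmel (E a) m k)ᴴ * pmel (E a) m l * P := by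
        simp only [sum_star_mul_smul_eq_compression (A := fun p : ι × Fin dB × Fin dB =>
          pmel (E p.1) p.2.1 p.2.2) hP hR hRA]
    _ = P * pmel (∑ a, (E a)ᴴ * E a) k l * P := by
        simp only [pmel_sum, pmel_conjTranspose_mul, Finset.mul_sum, Finset.sum_mul, mul_assoc]
    _ = (1 : Matrix (Fin dB) (Fin dB) ℂ) k l • P := by
        rw [hTP, pmel_one, one_apply]
        split_ifs <;> simp [hP.isIdempotentElem.eq]

theorem sum_kronecker_conj_channel {m b κ ι : Type*} [Fintype m] [Fintype b] [DecidableEq b]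
    [Fintype κ] [Fintype ι] {R : κ → Matrix m m ℂ} {E : ι → Matrix (m × b) (m × b) ℂ}
    {P : Matrix m m ℂ} {w : κ × ι → Matrix b b ℂ} {ρ : Matrix (m × b) (m × b) ℂ}
    (hP : Pᴴ = P) (hRE : ∀ c a, (R c ⊗ₖ (1 : Matrix b b ℂ)) * E a * (P ⊗ₖ 1) = P ⊗ₖ w (c, a))
    (hρ : (P ⊗ₖ (1 : Matrix b b ℂ)) * ρ * (P ⊗ₖ 1) = ρ) :
    ∑ c, (R c ⊗ₖ (1 : Matrix b b ℂ)) * (∑ a, E a * ρ * (E a)ᴴ) * (R c ⊗ₖ 1)ᴴ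
      = ∑ x, (P ⊗ₖ w x) * ρ * (P ⊗ₖ w x)ᴴ := by
  have hterm (c : κ) (a : ι) : (R c ⊗ₖ (1 : Matrix b b ℂ)) * (E a * ρ * (E a)ᴴ) * (R c ⊗ₖ 1)ᴴ
      = (P ⊗ₖ w (c, a)) * ρ * (P ⊗ₖ w (c, a))ᴴ := by
    conv_lhs => rw [← hρ]
    simp only [← hRE, conjTranspose_mul, conjTranspose_kronecker, hP, conjTranspose_one,
      mul_assoc]
  rw [Fintype.sum_prod_type]
  simp only [Finset.mul_sum, Finset.sum_mul, hterm]

end Bath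

theorem stmt_5_general {dS dB : ℕ} {ι : Type*} [Fintype ι]
    (PC : Matrix (Fin dS) (Fin dS) ℂ)
    (hPCH : PC.IsHermitian) (hPCproj : PC * PC = PC)
    (E : ι → Matrix (Fin dS × Fin dB) (Fin dS × Fin dB) ℂ)
    (hTP : ∑ a, (E a)ᴴ * E a = 1)
    (Λ : (ι × Fin dB × Fin dB) → (ι × Fin dB × Fin dB) → ℂ)
    (hKL : ∀ a b k ℓ m n, PC * (pmel (E a) k ℓ)ᴴ * pmel (E b) m n * PC
        = Λ (a, k, ℓ) (b, m, n) • PC) :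
    ∃ (κ : Type) (_ : Fintype κ) (R : κ → Matrix (Fin dS) (Fin dS) ℂ),
      (∑ c, (R c)ᴴ * R c = 1) ∧
      ∀ ρ : Matrix (Fin dS × Fin dB) (Fin dS × Fin dB) ℂ,
        ρ.PosSemidef → ρ.trace = 1 →
        (PC ⊗ₖ (1 : Matrix (Fin dB) (Fin dB) ℂ)) * ρ *
          (PC ⊗ₖ (1 : Matrix (Fin dB) (Fin dB) ℂ)) = ρ →
        trB (∑ c, (R c ⊗ₖ (1 : Matrix (Fin dB) (Fin dB) ℂ)) *
              (∑ a, E a * ρ * (E a)ᴴ) *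
              (R c ⊗ₖ (1 : Matrix (Fin dB) (Fin dB) ℂ))ᴴ) = trB ρ := by
  by_cases hPC0 : PC = 0
  · refine ⟨Unit, inferInstance, fun _ => 1, by simp, fun ρ _ hρtr hρ => ?_⟩
    rw [← hρ, hPC0, zero_kronecker, zero_mul, zero_mul, trace_zero] at hρtr
    exact absurd hρtr zero_ne_one
  have hP : IsStarProjection PC := ⟨hPCproj, hPCH⟩
  obtain ⟨κ, _, R, μ, hR, hRA⟩ :=
    exists_recovery (A := fun p : ι × Fin dB × Fin dB => pmel (E p.1) p.2.1 p.2.2) hP hPC0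
      fun p q => hKL p.1 q.1 p.2.1 p.2.2 q.2.1 q.2.2
  set w : κ × ι → Matrix (Fin dB) (Fin dB) ℂ := fun x => of fun k l => μ x.1 (x.2, k, l)
  have hRE (c : κ) (a : ι) : (R c ⊗ₖ (1 : Matrix (Fin dB) (Fin dB) ℂ)) * E a * (PC ⊗ₖ 1)
      = PC ⊗ₖ w (c, a) :=
    kronecker_one_mul_mul_kronecker_one_eq fun k l => hRA c (a, k, l)
  have hw : ∑ x, (w x)ᴴ * w x = 1 := sum_weight_conjTranspose_mul_self hP hPC0 hTP hR hRA
  refine ⟨κ, inferInstance, R, hR, fun ρ _ _ hρ => ?_⟩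
  rw [sum_kronecker_conj_channel hPCH hRE hρ, trB_sum_kronecker_conj, hw, one_kronecker_one,
    one_mul, hPCH.eq, ← trB_kronecker_one_mul_mul, hρ]

/-- 'If' direction of the OSQEC conditions: if
`P_C E_{a;kℓ}† E_{b;mn} P_C = Λ_{akℓ,bmn} P_C` for a Hermitian `Λ`, then there is a
CPTP system-only map `R_S` such that `R = R_S ⊗ id_B` recovers the noise `E` on
every state supported on `C ⊗ H_B`. -/
theorem stmt_5 {dS dB : ℕ} {ι : Type*} [Fintype ι]
    (PC : Matrix (Fin dS) (Fin dS) ℂ)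
    (hPCH : PC.IsHermitian) (hPCproj : PC * PC = PC)
    (E : ι → Matrix (Fin dS × Fin dB) (Fin dS × Fin dB) ℂ)
    (hTP : ∑ a, (E a)ᴴ * E a = 1)
    (Λ : (ι × Fin dB × Fin dB) → (ι × Fin dB × Fin dB) → ℂ)
    (hΛH : ∀ p q, Λ p q = star (Λ q p))
    (hKL : ∀ a b k ℓ m n, PC * (pmel (E a) k ℓ)ᴴ * pmel (E b) m n * PC
        = Λ (a, k, ℓ) (b, m, n) • PC) :
    ∃ (κ : Type) (_ : Fintype κ) (R : κ → Matrix (Fin dS) (Fin dS) ℂ),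
      (∑ c, (R c)ᴴ * R c = 1) ∧
      ∀ ρ : Matrix (Fin dS × Fin dB) (Fin dS × Fin dB) ℂ,
        ρ.PosSemidef → ρ.trace = 1 →
        (PC ⊗ₖ (1 : Matrix (Fin dB) (Fin dB) ℂ)) * ρ *
          (PC ⊗ₖ (1 : Matrix (Fin dB) (Fin dB) ℂ)) = ρ →
        trB (∑ c, (R c ⊗ₖ (1 : Matrix (Fin dB) (Fin dB) ℂ)) *
              (∑ a, E a * ρ * (E a)ᴴ) *
              (R c ⊗ₖ (1 : Matrix (Fin dB) (Fin dB) ℂ))ᴴ) = trB ρ :=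
  stmt_5_general PC hPCH hPCproj E hTP Λ hKL

end OSQEC5
end

section
/- Suppose a CPTP map E with Kraus operators {E_a} on H_S ⊗ H_B is perfectly correctable on code C ⊆ H_S with a system-only recovery. Then any CPTP map Ẽ with Kraus operators {Ẽ_b} such that Ẽ_b P ∈ span{E_a P} (where P = P_C ⊗ 1_B) is also perfectly correctable on C; moreover, both are corrected by the same recovery R_S ⊗ id_B with R_S having Kraus operators {P_C F_α†}, where {F_α P_C} is the orthonormalized family of error operators associated with E. -/
open Matrix
open scoped BigOperators Kronecker ComplexOrder

namespace OSQEC8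

/-- Partial trace over the bath factor. -/
noncomputable def trB {dS dB : ℕ}
    (M : Matrix (Fin dS × Fin dB) (Fin dS × Fin dB) ℂ) :
    Matrix (Fin dS) (Fin dS) ℂ :=
  Matrix.of fun i j => ∑ k : Fin dB, M (i, k) (j, k)

/-- Partial matrix element `⟨k|M|ℓ⟩`, a system operator. -/
def pmel {dS dB : ℕ} (M : Matrix (Fin dS × Fin dB) (Fin dS × Fin dB) ℂ)
    (k ℓ : Fin dB) : Matrix (Fin dS) (Fin dS) ℂ :=
  Matrix.of fun i j => M (i, k) (j, ℓ)

lemma kron_conjT {m n : Type*} [Fintype m] [Fintype n]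
    (A : Matrix m m ℂ) (B : Matrix n n ℂ) :
    (A ⊗ₖ B)ᴴ = Aᴴ ⊗ₖ Bᴴ := by
  ext ⟨i, k⟩ ⟨j, l⟩
  simp [conjTranspose_apply, mul_comm]

lemma kron_sum {m n γ : Type*} [Fintype m] [Fintype n]
    (A : Matrix m m ℂ) (s : Finset γ) (M : γ → Matrix n n ℂ) :
    A ⊗ₖ (∑ x ∈ s, M x) = ∑ x ∈ s, A ⊗ₖ M x := by
  ext ⟨i, k⟩ ⟨j, l⟩
  simp [Matrix.sum_apply, Finset.mul_sum]

lemma trB_sum {ds db : ℕ} {ι : Type*} (s : Finset ι)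
    (M : ι → Matrix (Fin ds × Fin db) (Fin ds × Fin db) ℂ) :
    trB (∑ x ∈ s, M x) = ∑ x ∈ s, trB (M x) := by
  ext i j
  simp [trB, Matrix.sum_apply]
  rw [Finset.sum_comm]

lemma sum_if_pull {γ : Type*} (s : Finset γ) (P : Prop) [Decidable P] (f : γ → ℂ) :
    ∑ x ∈ s, (if P then f x else 0) = if P then ∑ x ∈ s, f x else 0 := by
  split <;> simp

lemma trB_cyc {dS dB : ℕ}
    (M : Matrix (Fin dS × Fin dB) (Fin dS × Fin dB) ℂ)
    (B C : Matrix (Fin dB) (Fin dB) ℂ) :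
    trB (((1 : Matrix (Fin dS) (Fin dS) ℂ) ⊗ₖ B) * M *
        ((1 : Matrix (Fin dS) (Fin dS) ℂ) ⊗ₖ C))
      = trB (M * ((1 : Matrix (Fin dS) (Fin dS) ℂ) ⊗ₖ (C * B))) := by
  ext i j
  simp only [trB, Matrix.of_apply, mul_apply, Fintype.sum_prod_type,
    kroneckerMap_apply, one_apply, ite_mul, one_mul, zero_mul, mul_ite, mul_zero,
    Finset.sum_ite_eq, Finset.sum_ite_eq', Finset.mem_univ, if_true]
  simp_rw [sum_if_pull, Finset.sum_ite_eq', Finset.mem_univ, if_true,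
    Finset.sum_mul, Finset.mul_sum]
  simp_rw [ite_mul, zero_mul, Finset.sum_ite_eq, Finset.mem_univ, if_true,
    Finset.sum_mul]
  rw [Finset.sum_comm]
  conv_lhs => rw [show (fun (l : Fin dB) => ∑ m : Fin dB, ∑ k : Fin dB,
    B m k * M (i, k) (j, l) * C l m) = (fun l => ∑ k : Fin dB, ∑ m : Fin dB,
    B m k * M (i, k) (j, l) * C l m) from funext fun l => Finset.sum_comm]
  rw [Finset.sum_comm]
  exact Finset.sum_congr rfl fun k _ => Finset.sum_congr rfl fun l _ =>
    Finset.sum_congr rfl fun m _ => by ring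

lemma pmel_mulP {dS dB : ℕ}
    (M : Matrix (Fin dS × Fin dB) (Fin dS × Fin dB) ℂ)
    (PC : Matrix (Fin dS) (Fin dS) ℂ) (k ℓ : Fin dB) :
    pmel (M * (PC ⊗ₖ (1 : Matrix (Fin dB) (Fin dB) ℂ))) k ℓ = pmel M k ℓ * PC := by
  ext i j
  simp [pmel, mul_apply, Fintype.sum_prod_type, one_apply, mul_ite, mul_zero,
    Finset.sum_ite_eq', Finset.mem_univ]

/-- The core recovery computation, for any Kraus family whose partial matrix
elements times `PC` lie in the span of the `F α * PC`. -/
lemma core {dS dB : ℕ} {κ α' : Type*} [Fintype κ] [Fintype α'] [DecidableEq α']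
    (PC : Matrix (Fin dS) (Fin dS) ℂ)
    (hPCH : PC.IsHermitian) (hPCproj : PC * PC = PC) (hPC0 : PC ≠ 0)
    (F : α' → Matrix (Fin dS) (Fin dS) ℂ)
    (hF : ∀ α β, PC * (F α)ᴴ * F β * PC = (if α = β then (1 : ℂ) else 0) • PC)
    (K : κ → Matrix (Fin dS × Fin dB) (Fin dS × Fin dB) ℂ)
    (hKTP : ∑ j, (K j)ᴴ * K j = 1)
    (f : κ → Fin dB → Fin dB → α' → ℂ)
    (hf : ∀ j k ℓ, pmel (K j) k ℓ * PC = ∑ α, f j k ℓ α • (F α * PC))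
    (ρ : Matrix (Fin dS × Fin dB) (Fin dS × Fin dB) ℂ)
    (hρ : (PC ⊗ₖ (1 : Matrix (Fin dB) (Fin dB) ℂ)) * ρ *
      (PC ⊗ₖ (1 : Matrix (Fin dB) (Fin dB) ℂ)) = ρ) :
    trB (∑ α, ((PC * (F α)ᴴ) ⊗ₖ (1 : Matrix (Fin dB) (Fin dB) ℂ)) *
          (∑ j, K j * ρ * (K j)ᴴ) *
          ((PC * (F α)ᴴ) ⊗ₖ (1 : Matrix (Fin dB) (Fin dB) ℂ))ᴴ) = trB ρ := by
  set P : Matrix (Fin dS × Fin dB) (Fin dS × Fin dB) ℂ :=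
    PC ⊗ₖ (1 : Matrix (Fin dB) (Fin dB) ℂ) with hP
  have hPH : Pᴴ = P := by rw [hP, kron_conjT, hPCH.eq, conjTranspose_one]
  have hPP : P * P = P := by rw [hP, ← Matrix.mul_kronecker_mul, hPCproj, one_mul]
  set B : κ → α' → Matrix (Fin dB) (Fin dB) ℂ :=
    fun j α => Matrix.of fun k ℓ => f j k ℓ α with hB
  -- Step A
  have hKP : ∀ j, K j * P = ∑ α, (F α * PC) ⊗ₖ B j α := by
    intro j
    ext ⟨i, k⟩ ⟨i', ℓ⟩
    have h1 : (K j * P) (i, k) (i', ℓ) = (pmel (K j) k ℓ * PC) i i' := by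
      simp [hP, pmel, mul_apply, Fintype.sum_prod_type, one_apply, mul_ite,
        mul_zero, Finset.sum_ite_eq', Finset.mem_univ]
    rw [h1, hf j k ℓ]
    simp [Matrix.sum_apply, hB, mul_comm]
  -- Step B
  have hRKP : ∀ α j, ((PC * (F α)ᴴ) ⊗ₖ (1 : Matrix (Fin dB) (Fin dB) ℂ)) *
      (K j * P) = PC ⊗ₖ B j α := by
    intro α j
    rw [hKP j, Finset.mul_sum]
    have hterm : ∀ β, ((PC * (F α)ᴴ) ⊗ₖ (1 : Matrix (Fin dB) (Fin dB) ℂ)) *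
        ((F β * PC) ⊗ₖ B j β) = (if α = β then (1 : ℂ) else 0) • (PC ⊗ₖ B j β) := by
      intro β
      rw [← Matrix.mul_kronecker_mul, one_mul]
      have h2 : PC * (F α)ᴴ * (F β * PC) = (if α = β then (1 : ℂ) else 0) • PC := by
        rw [← mul_assoc]; exact hF α β
      rw [h2, smul_kronecker]
    rw [Finset.sum_congr rfl fun β _ => hterm β]
    simp [ite_smul, zero_smul, Finset.sum_ite_eq, Finset.mem_univ]
  -- Step C : sum of BᴴB is 1
  have hsumB : ∑ j, ∑ α, (B j α)ᴴ * B j α = 1 := by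
    have h1 : ∑ j, (K j * P)ᴴ * (K j * P) = P := by
      have h1' : ∑ j, (K j * P)ᴴ * (K j * P) = Pᴴ * (∑ j, (K j)ᴴ * K j) * P := by
        rw [Finset.mul_sum, Finset.sum_mul]
        exact Finset.sum_congr rfl fun j _ => by
          simp only [conjTranspose_mul, mul_assoc]
      rw [h1', hKTP, mul_one, hPH, hPP]
    have h2 : ∑ j, (K j * P)ᴴ * (K j * P)
        = PC ⊗ₖ (∑ j, ∑ α, (B j α)ᴴ * B j α) := by
      rw [kron_sum]
      refine Finset.sum_congr rfl fun j _ => ?_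
      rw [kron_sum, hKP j, conjTranspose_sum, Finset.sum_mul]
      refine Finset.sum_congr rfl fun α _ => ?_
      rw [Finset.mul_sum]
      have hterm : ∀ β, ((F α * PC) ⊗ₖ B j α)ᴴ * ((F β * PC) ⊗ₖ B j β)
          = (if α = β then (1 : ℂ) else 0) • (PC ⊗ₖ ((B j α)ᴴ * B j β)) := by
        intro β
        rw [kron_conjT, ← Matrix.mul_kronecker_mul]
        have h3 : (F α * PC)ᴴ * (F β * PC)
            = (if α = β then (1 : ℂ) else 0) • PC := by
          calc (F α * PC)ᴴ * (F β * PC) = PC * (F α)ᴴ * F β * PC := by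
                rw [conjTranspose_mul, hPCH.eq]; noncomm_ring
            _ = _ := hF α β
        rw [h3, smul_kronecker]
      rw [Finset.sum_congr rfl fun β _ => hterm β]
      simp [ite_smul, zero_smul, Finset.sum_ite_eq, Finset.mem_univ]
    have h4 : PC ⊗ₖ (∑ j, ∑ α, (B j α)ᴴ * B j α)
        = PC ⊗ₖ (1 : Matrix (Fin dB) (Fin dB) ℂ) := by rw [← h2, h1, hP]
    obtain ⟨i0, hi0⟩ : ∃ p : Fin dS × Fin dS, PC p.1 p.2 ≠ 0 := by
      by_contra hc
      push_neg at hc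
      exact hPC0 (Matrix.ext fun i j => hc (i, j))
    ext k ℓ
    have h5 := congrFun (congrFun h4 (i0.1, k)) (i0.2, ℓ)
    simp only [kroneckerMap_apply] at h5
    exact mul_left_cancel₀ hi0 h5
  -- Step D
  have key : ∀ α j, ((PC * (F α)ᴴ) ⊗ₖ (1 : Matrix (Fin dB) (Fin dB) ℂ)) *
      (K j * ρ * (K j)ᴴ) * ((PC * (F α)ᴴ) ⊗ₖ (1 : Matrix (Fin dB) (Fin dB) ℂ))ᴴ
      = ((1 : Matrix (Fin dS) (Fin dS) ℂ) ⊗ₖ B j α) * ρ *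
        ((1 : Matrix (Fin dS) (Fin dS) ℂ) ⊗ₖ (B j α)ᴴ) := by
    intro α j
    set R := (PC * (F α)ᴴ) ⊗ₖ (1 : Matrix (Fin dB) (Fin dB) ℂ) with hR
    have e1 : R * (K j * ρ * (K j)ᴴ) * Rᴴ
        = (R * (K j * P)) * ρ * (R * (K j * P))ᴴ := by
      rw [conjTranspose_mul, conjTranspose_mul, hPH]
      conv_lhs => rw [← hρ]
      simp only [mul_assoc]
    rw [e1, hRKP α j]
    have e2 : PC ⊗ₖ B j α = ((1 : Matrix (Fin dS) (Fin dS) ℂ) ⊗ₖ B j α) * P := by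
      rw [hP, ← Matrix.mul_kronecker_mul, one_mul, mul_one]
    have e3 : (PC ⊗ₖ B j α)ᴴ = P * ((1 : Matrix (Fin dS) (Fin dS) ℂ) ⊗ₖ (B j α)ᴴ) := by
      rw [kron_conjT, hPCH.eq, hP, ← Matrix.mul_kronecker_mul, mul_one, one_mul]
    rw [e3]
    conv_lhs => rw [e2]
    calc ((1 : Matrix (Fin dS) (Fin dS) ℂ) ⊗ₖ B j α) * P * ρ *
          (P * ((1 : Matrix (Fin dS) (Fin dS) ℂ) ⊗ₖ (B j α)ᴴ))
        = ((1 : Matrix (Fin dS) (Fin dS) ℂ) ⊗ₖ B j α) * (P * ρ * P) *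
          ((1 : Matrix (Fin dS) (Fin dS) ℂ) ⊗ₖ (B j α)ᴴ) := by
          simp only [mul_assoc]
      _ = _ := by rw [hρ]
  have expand : ∀ α, ((PC * (F α)ᴴ) ⊗ₖ (1 : Matrix (Fin dB) (Fin dB) ℂ)) *
      (∑ j, K j * ρ * (K j)ᴴ) *
      ((PC * (F α)ᴴ) ⊗ₖ (1 : Matrix (Fin dB) (Fin dB) ℂ))ᴴ
      = ∑ j, ((1 : Matrix (Fin dS) (Fin dS) ℂ) ⊗ₖ B j α) * ρ *
        ((1 : Matrix (Fin dS) (Fin dS) ℂ) ⊗ₖ (B j α)ᴴ) := by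
    intro α
    rw [Finset.mul_sum, Finset.sum_mul]
    exact Finset.sum_congr rfl fun j _ => key α j
  calc trB (∑ α, ((PC * (F α)ᴴ) ⊗ₖ (1 : Matrix (Fin dB) (Fin dB) ℂ)) *
          (∑ j, K j * ρ * (K j)ᴴ) *
          ((PC * (F α)ᴴ) ⊗ₖ (1 : Matrix (Fin dB) (Fin dB) ℂ))ᴴ)
      = ∑ α, ∑ j, trB (ρ * ((1 : Matrix (Fin dS) (Fin dS) ℂ) ⊗ₖ
          ((B j α)ᴴ * B j α))) := by
        rw [trB_sum]
        refine Finset.sum_congr rfl fun α _ => ?_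
        rw [expand α, trB_sum]
        exact Finset.sum_congr rfl fun j _ => trB_cyc ρ (B j α) ((B j α)ᴴ)
    _ = trB (ρ * ((1 : Matrix (Fin dS) (Fin dS) ℂ) ⊗ₖ
          (∑ j, ∑ α, (B j α)ᴴ * B j α))) := by
        rw [kron_sum, Finset.mul_sum, trB_sum, Finset.sum_comm]
        refine Finset.sum_congr rfl fun α _ => ?_
        rw [kron_sum, Finset.mul_sum, trB_sum]
    _ = trB ρ := by
        rw [hsumB, Matrix.one_kronecker_one, mul_one]

/-- Lemma 1 (OSQEC on the linear span): if the CPTP `E ~ {E_a}` is perfectly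
correctable on `C` via the orthonormalized family `{F_α P_C}` (every
`⟨k|E_a|ℓ⟩P_C` lying in `span{F_α P_C}`), then any CPTP `Ẽ ~ {Ẽ_b}` with
`Ẽ_b P ∈ span{E_a P}` is also perfectly correctable on `C`, and both are
corrected by the same recovery `R_S ⊗ id_B`, `R_S ~ {P_C F_α†}`. -/
theorem stmt_8 {dS dB : ℕ} {ι ι' α' : Type*} [Fintype ι] [Fintype ι'] [Fintype α'] [DecidableEq α']
    (PC : Matrix (Fin dS) (Fin dS) ℂ)
    (hPCH : PC.IsHermitian) (hPCproj : PC * PC = PC)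
    (E : ι → Matrix (Fin dS × Fin dB) (Fin dS × Fin dB) ℂ)
    (hTP : ∑ a, (E a)ᴴ * E a = 1)
    (Et : ι' → Matrix (Fin dS × Fin dB) (Fin dS × Fin dB) ℂ)
    (hTPt : ∑ b, (Et b)ᴴ * Et b = 1)
    (hspan : ∀ b, ∃ c : ι → ℂ,
      Et b * (PC ⊗ₖ (1 : Matrix (Fin dB) (Fin dB) ℂ))
        = ∑ a, c a • (E a * (PC ⊗ₖ (1 : Matrix (Fin dB) (Fin dB) ℂ))))
    (F : α' → Matrix (Fin dS) (Fin dS) ℂ)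
    (hF : ∀ α β, PC * (F α)ᴴ * F β * PC = (if α = β then (1 : ℂ) else 0) • PC)
    (e : ι → Fin dB → Fin dB → α' → ℂ)
    (he : ∀ a k ℓ, pmel (E a) k ℓ * PC = ∑ α, e a k ℓ α • (F α * PC)) :
    ∀ ρ : Matrix (Fin dS × Fin dB) (Fin dS × Fin dB) ℂ,
      ρ.PosSemidef → ρ.trace = 1 →
      (PC ⊗ₖ (1 : Matrix (Fin dB) (Fin dB) ℂ)) * ρ *
        (PC ⊗ₖ (1 : Matrix (Fin dB) (Fin dB) ℂ)) = ρ →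
      trB (∑ α, ((PC * (F α)ᴴ) ⊗ₖ (1 : Matrix (Fin dB) (Fin dB) ℂ)) *
            (∑ a, E a * ρ * (E a)ᴴ) *
            ((PC * (F α)ᴴ) ⊗ₖ (1 : Matrix (Fin dB) (Fin dB) ℂ))ᴴ) = trB ρ ∧
      trB (∑ α, ((PC * (F α)ᴴ) ⊗ₖ (1 : Matrix (Fin dB) (Fin dB) ℂ)) *
            (∑ b, Et b * ρ * (Et b)ᴴ) *
            ((PC * (F α)ᴴ) ⊗ₖ (1 : Matrix (Fin dB) (Fin dB) ℂ))ᴴ) = trB ρ := by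
  intro ρ hpsd htr hcode
  have hPC0 : PC ≠ 0 := by
    intro h
    rw [h] at hcode
    simp only [Matrix.zero_kronecker, zero_mul, mul_zero] at hcode
    rw [← hcode] at htr
    simp [Matrix.trace] at htr
  refine ⟨core PC hPCH hPCproj hPC0 F hF E hTP e he ρ hcode, ?_⟩
  choose c hc using hspan
  have het : ∀ b k ℓ, pmel (Et b) k ℓ * PC
      = ∑ α, (∑ a, c b a * e a k ℓ α) • (F α * PC) := by
    intro b k ℓ
    rw [← pmel_mulP (Et b) PC k ℓ, hc b]
    have h2 : pmel (∑ a, c b a • (E a * (PC ⊗ₖ (1 : Matrix (Fin dB) (Fin dB) ℂ)))) k ℓ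
        = ∑ a, c b a • pmel (E a * (PC ⊗ₖ (1 : Matrix (Fin dB) (Fin dB) ℂ))) k ℓ := by
      ext i j
      simp [pmel, Matrix.sum_apply]
    rw [h2]
    simp_rw [pmel_mulP, he, Finset.smul_sum, smul_smul]
    rw [Finset.sum_comm]
    exact Finset.sum_congr rfl fun α _ => (Finset.sum_smul).symm
  exact core PC hPCH hPCproj hPC0 F hF Et hTPt
    (fun b k ℓ α => ∑ a, c b a * e a k ℓ α) het ρ hcode


end OSQEC8
end

section
/- Let E ∼ {E_a} be a CP map on H_S ⊗ H_B that is sub-trace-preserving on the code: P(Σ_a E_a† E_a)P = γ² P for a constant γ > 0, where P = P_C ⊗ 1_B. If the OSQEC conditions P_C E_{a;kℓ}† E_{b;mn} P_C = Λ_{akℓ,bmn} P_C hold (Λ Hermitian), then there is a CPTP recovery R = R_S ⊗ id_B with Tr_B{(R∘E)(ρ)} = γ² Tr_B{ρ} for all states ρ supported on C ⊗ H_B. -/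
open Matrix
open scoped BigOperators Kronecker ComplexOrder

/-!
Write `F_{akℓ} = ⟨k|E_a|ℓ⟩` for the system parts of the Kraus operators. The OSQEC
conditions are the Knill–Laflamme conditions for the family `F` with matrix `Λ`, so the
Knill–Laflamme recovery applies: `Λ` is positive semidefinite, and diagonalizing
`Λ = U D Uᴴ` turns the `F_p P` into mutually orthogonal errors `A_μ = ∑_p U_{pμ} F_p P`
with `A_μᴴ A_ν = δ_{μν} d_μ P`, which the normalized `A_μᴴ` undo. Hence
`R(F_{akm} ρ_{mn} F_{akn}ᴴ) = Λ_{akn,akm} ρ_{mn}` for the bath blocks `ρ_{mn}` of a code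
state. Read in bath components, the normalization `P (∑ E_aᴴ E_a) P = γ² P` says
`∑_{a,k} Λ_{akn,akm} P = γ² δ_{nm} P`, so summing over `a, k` leaves `γ² Tr_B ρ`.
-/

namespace OSQEC11

noncomputable def trB {dS dB : ℕ}
    (M : Matrix (Fin dS × Fin dB) (Fin dS × Fin dB) ℂ) :
    Matrix (Fin dS) (Fin dS) ℂ :=
  Matrix.of fun i j => ∑ k : Fin dB, M (i, k) (j, k)

/-- Partial matrix element `⟨k|M|ℓ⟩`, a system operator. -/
def pmel {dS dB : ℕ} (M : Matrix (Fin dS × Fin dB) (Fin dS × Fin dB) ℂ)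
    (k ℓ : Fin dB) : Matrix (Fin dS) (Fin dS) ℂ :=
  Matrix.of fun i j => M (i, k) (j, ℓ)

section Spectral

variable {J : Type*} [Fintype J] [DecidableEq J] {Λ : Matrix J J ℂ}

lemma _root_.Matrix.IsHermitian.star_eigenvectorUnitary_mul_mul (hΛ : Λ.IsHermitian) :
    star (hΛ.eigenvectorUnitary : Matrix J J ℂ) * Λ * hΛ.eigenvectorUnitary =
      diagonal (fun μ => (hΛ.eigenvalues μ : ℂ)) := by
  have h := hΛ.conjStarAlgAut_star_eigenvectorUnitary
  rwa [Unitary.conjStarAlgAut_star_apply] at h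

lemma _root_.Matrix.IsHermitian.apply_eq_sum_eigenvalues (hΛ : Λ.IsHermitian) (p q : J) :
    Λ p q = ∑ μ, (hΛ.eigenvectorUnitary : Matrix J J ℂ) p μ * hΛ.eigenvalues μ *
      star ((hΛ.eigenvectorUnitary : Matrix J J ℂ) q μ) := by
  have h := hΛ.spectral_theorem
  rw [Unitary.conjStarAlgAut_apply] at h
  conv_lhs => rw [h]
  simp only [mul_apply, diagonal_apply, Function.comp_apply, mul_ite, mul_zero,
    Finset.sum_ite_eq', Finset.mem_univ, if_true, star_apply]
  rfl

end Spectral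

section Orthogonal

variable {n K : Type*} [Fintype n] [DecidableEq K] {P : Matrix n n ℂ} {A : K → Matrix n n ℂ}
  {d : K → ℝ}

/-- Since `(√0)⁻¹ = 0`, an error with `d μ = 0` (which vanishes) is normalized to `0`. -/
noncomputable def normalize (A : K → Matrix n n ℂ) (d : K → ℝ) (μ : K) : Matrix n n ℂ :=
  (((√(d μ))⁻¹ : ℝ) : ℂ) • A μ

lemma normalize_conjTranspose_mul
    (hAA : ∀ μ ν, (A μ)ᴴ * A ν = diagonal (fun μ => (d μ : ℂ)) μ ν • P)
    (μ ν : K) :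
    (normalize A d μ)ᴴ * A ν = diagonal (fun μ => ((√(d μ) : ℝ) : ℂ)) μ ν • P := by
  rw [normalize, conjTranspose_smul, smul_mul, hAA, smul_smul, Complex.star_def,
    Complex.conj_ofReal]
  by_cases h : μ = ν
  · subst h
    simp only [diagonal_apply_eq, ← Complex.ofReal_mul, inv_mul_eq_div, Real.div_sqrt]
  · simp [diagonal_apply_ne _ h]

lemma eq_sqrt_smul_normalize (hd : ∀ μ, 0 ≤ d μ)
    (hAA : ∀ μ ν, (A μ)ᴴ * A ν = diagonal (fun μ => (d μ : ℂ)) μ ν • P) (μ : K) :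
    A μ = ((√(d μ) : ℝ) : ℂ) • normalize A d μ := by
  rcases (hd μ).eq_or_lt with h0 | hpos
  · have hA0 : (A μ)ᴴ * A μ = 0 := by simp [hAA, ← h0]
    simp [conjTranspose_mul_self_eq_zero.mp hA0, ← h0]
  · rw [normalize, smul_smul, ← Complex.ofReal_mul,
      mul_inv_cancel₀ (Real.sqrt_pos.mpr hpos).ne', Complex.ofReal_one, one_smul]

variable [Fintype K]

lemma sum_normalize_mul_conjTranspose_mul (hd : ∀ μ, 0 ≤ d μ) (hAP : ∀ μ, A μ * P = A μ)
    (hAA : ∀ μ ν, (A μ)ᴴ * A ν = diagonal (fun μ => (d μ : ℂ)) μ ν • P) (ν : K) :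
    (∑ μ, normalize A d μ * (normalize A d μ)ᴴ) * A ν = A ν := by
  simp only [Finset.sum_mul, mul_assoc, normalize_conjTranspose_mul hAA, diagonal_apply,
    ite_smul, zero_smul, mul_ite, mul_zero, Finset.sum_ite_eq', Finset.mem_univ, if_true]
  rw [mul_smul_comm, ← smul_mul, ← eq_sqrt_smul_normalize hd hAA, hAP]

variable [DecidableEq n]

/-- The Kraus operators are the `Wμᴴ` for `Wμ = normalize A d μ`, completed by `1 - Q`
with `Q = ∑ Wμ Wμᴴ`; `Q` projects onto the span of the errors, so `1 - Q` kills them. -/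
lemma exists_recovery_of_orthogonal (hP : P.IsHermitian) (hd : ∀ μ, 0 ≤ d μ)
    (hAP : ∀ μ, A μ * P = A μ)
    (hAA : ∀ μ ν, (A μ)ᴴ * A ν = diagonal (fun μ => (d μ : ℂ)) μ ν • P) :
    ∃ R : Option K → Matrix n n ℂ, ∑ c, (R c)ᴴ * R c = 1 ∧
      ∀ (a b : K → ℂ) (X : Matrix n n ℂ), P * X * P = X →
        ∑ c, R c * ((∑ μ, a μ • A μ) * X * (∑ μ, b μ • A μ)ᴴ) * (R c)ᴴ =
          (∑ μ, a μ * star (b μ) * d μ) • X := by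
  have hWA := normalize_conjTranspose_mul hAA
  have hQA := sum_normalize_mul_conjTranspose_mul hd hAP hAA
  set W := normalize A d with hW
  set Q : Matrix n n ℂ := ∑ μ, W μ * (W μ)ᴴ with hQ
  have hQQ : Q * Q = Q := by
    have hQW (μ : K) : Q * W μ = W μ := by simp only [hW, normalize, mul_smul_comm, hQA]
    nth_rewrite 2 [hQ]
    simp only [Finset.mul_sum, ← mul_assoc, hQW]
    exact hQ.symm
  have hQB (a : K → ℂ) : (1 - Q) * ∑ μ, a μ • A μ = 0 := by
    simp [sub_mul, Finset.mul_sum, hQA]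
  have hWB (κ : K) (a : K → ℂ) :
      (W κ)ᴴ * ∑ μ, a μ • A μ = (a κ * √(d κ)) • P := by
    simp [Finset.mul_sum, hWA, diagonal_apply, mul_smul, Complex.coe_smul]
  refine ⟨fun c => c.elim (1 - Q) fun μ => (W μ)ᴴ, ?_, fun a b X hX => ?_⟩
  · have hQH : Qᴴ = Q := by
      simp only [hQ, conjTranspose_sum, conjTranspose_mul, conjTranspose_conjTranspose]
    simp only [Fintype.sum_option, Option.elim, conjTranspose_sub, conjTranspose_one, hQH,
      conjTranspose_conjTranspose, ← hQ, sub_mul, mul_sub, hQQ, one_mul, mul_one]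
    abel
  · have hconj (R B C : Matrix n n ℂ) :
        R * (B * X * Cᴴ) * Rᴴ = (R * B) * X * (R * C)ᴴ := by
      simp only [conjTranspose_mul, mul_assoc]
    simp only [Fintype.sum_option, Option.elim, hconj, hQB, hWB, zero_mul, zero_add,
      conjTranspose_smul, hP.eq, smul_mul, mul_smul_comm, hX, smul_smul, Finset.sum_smul]
    refine Finset.sum_congr rfl fun μ _ => ?_
    have hsq : ((√(d μ) : ℝ) : ℂ) * ((√(d μ) : ℝ) : ℂ) = d μ := by
      exact_mod_cast Real.mul_self_sqrt (hd μ)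
    simp only [star_mul', Complex.star_def, Complex.conj_ofReal]
    congr 1
    linear_combination (a μ * (starRingEnd ℂ) (b μ)) * hsq

end Orthogonal

section KnillLaflamme

variable {n J : Type*} [Fintype n] [Fintype J]

lemma nonneg_of_posSemidef_smul {P : Matrix n n ℂ} (hP : P.PosSemidef) (hP0 : P ≠ 0) {c : ℂ}
    (hc : (c • P).PosSemidef) : 0 ≤ c := by
  have htr : 0 < P.trace :=
    hP.trace_nonneg.lt_of_ne (Ne.symm (mt hP.trace_eq_zero_iff.mp hP0))
  have h := hc.trace_nonneg
  rw [trace_smul, smul_eq_mul] at h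
  simpa [mul_div_cancel_right₀ _ htr.ne'] using div_nonneg h htr.le

lemma posSemidef_of_isHermitian_of_idempotent {P : Matrix n n ℂ} (hP : P.IsHermitian)
    (hPP : P * P = P) : P.PosSemidef := by
  simpa [hP.eq, hPP] using posSemidef_conjTranspose_mul_self P

def codeCombo (F : J → Matrix n n ℂ) (P : Matrix n n ℂ) (v : J → ℂ) : Matrix n n ℂ :=
  ∑ p, v p • (F p * P)

variable {F : J → Matrix n n ℂ} {P : Matrix n n ℂ} {Λ : Matrix J J ℂ}

lemma codeCombo_conjTranspose_mul (hP : P.IsHermitian)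
    (hKL : ∀ p q, P * (F p)ᴴ * F q * P = Λ p q • P) (u v : J → ℂ) :
    (codeCombo F P u)ᴴ * codeCombo F P v = (star u ⬝ᵥ Λ *ᵥ v) • P := by
  simp only [codeCombo, conjTranspose_sum, conjTranspose_smul, conjTranspose_mul, hP.eq,
    Finset.sum_mul_sum, smul_mul_smul_comm]
  simp only [dotProduct, mulVec, Finset.mul_sum, Finset.sum_smul, Pi.star_apply]
  refine Finset.sum_congr rfl fun p _ => Finset.sum_congr rfl fun q _ => ?_
  rw [← mul_assoc, hKL, smul_smul]
  ring_nf

lemma codeCombo_mul_self (hPP : P * P = P) (v : J → ℂ) :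
    codeCombo F P v * P = codeCombo F P v := by
  simp only [codeCombo, Finset.sum_mul, smul_mul, mul_assoc, hPP]

lemma posSemidef_of_knillLaflamme (hP : P.IsHermitian) (hPP : P * P = P) (hP0 : P ≠ 0)
    (hΛ : Λ.IsHermitian) (hKL : ∀ p q, P * (F p)ᴴ * F q * P = Λ p q • P) : Λ.PosSemidef :=
  PosSemidef.of_dotProduct_mulVec_nonneg hΛ fun x =>
    nonneg_of_posSemidef_smul (posSemidef_of_isHermitian_of_idempotent hP hPP) hP0 <| by
      simpa only [codeCombo_conjTranspose_mul hP hKL] using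
        posSemidef_conjTranspose_mul_self (codeCombo F P x)

lemma dotProduct_col_mulVec_col (U M : Matrix J J ℂ) (μ ν : J) :
    star (fun p => U p μ) ⬝ᵥ M *ᵥ (fun p => U p ν) = (star U * M * U) μ ν := by
  simp only [dotProduct, mulVec, mul_apply, Finset.mul_sum, Finset.sum_mul, star_apply,
    Pi.star_apply]
  rw [Finset.sum_comm]
  simp only [mul_assoc]

lemma mul_eq_sum_codeCombo [DecidableEq J] {U : Matrix J J ℂ} (hU : U * star U = 1) (p : J) :
    F p * P = ∑ ν, star (U p ν) • codeCombo F P (U · ν) := by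
  have hUp (q : J) : ∑ ν, U q ν * star (U p ν) = if q = p then 1 else 0 := by
    simpa [mul_apply, one_apply] using congrFun (congrFun hU q) p
  simp only [codeCombo, Finset.smul_sum, smul_smul]
  rw [Finset.sum_comm]
  simp only [← Finset.sum_smul, mul_comm (star _), hUp, ite_smul, one_smul, zero_smul,
    Finset.sum_ite_eq', Finset.mem_univ, if_true]

theorem exists_recovery_of_knillLaflamme [DecidableEq n] [DecidableEq J] (hP : P.IsHermitian)
    (hPP : P * P = P) (hΛ : Λ.IsHermitian)
    (hKL : ∀ p q, P * (F p)ᴴ * F q * P = Λ p q • P) :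
    ∃ (κ : Type) (_ : Fintype κ) (R : κ → Matrix n n ℂ), ∑ c, (R c)ᴴ * R c = 1 ∧
      ∀ p q (X : Matrix n n ℂ), P * X * P = X →
        ∑ c, R c * (F p * X * (F q)ᴴ) * (R c)ᴴ = Λ q p • X := by
  by_cases hP0 : P = 0
  · refine ⟨Unit, inferInstance, fun _ => 1, by simp, fun p q X hX => ?_⟩
    subst hP0
    rw [← hX]
    simp
  set U : Matrix J J ℂ := (hΛ.eigenvectorUnitary : Matrix J J ℂ)
  have hU : U * star U = 1 := Unitary.coe_mul_star_self _
  obtain ⟨R, hR, hrec⟩ := exists_recovery_of_orthogonal (A := fun μ => codeCombo F P (U · μ))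
    hP (posSemidef_of_knillLaflamme hP hPP hP0 hΛ hKL).eigenvalues_nonneg
    (fun μ => codeCombo_mul_self hPP _)
    (fun μ ν => by rw [codeCombo_conjTranspose_mul hP hKL, dotProduct_col_mulVec_col,
      hΛ.star_eigenvectorUnitary_mul_mul])
  let e := (Fintype.equivFin (Option J)).symm
  refine ⟨_, inferInstance, fun c => R (e c), (e.sum_comp fun c => (R c)ᴴ * R c).trans hR,
    fun p q X hX => ?_⟩
  have hFX : F p * X * (F q)ᴴ = (F p * P) * X * (F q * P)ᴴ := by
    conv_lhs => rw [← hX]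
    simp only [conjTranspose_mul, hP.eq, mul_assoc]
  rw [e.sum_comp (fun c => R c * (F p * X * (F q)ᴴ) * (R c)ᴴ), hFX,
    mul_eq_sum_codeCombo hU p, mul_eq_sum_codeCombo hU q,
    hrec _ _ X hX, hΛ.apply_eq_sum_eigenvalues]
  congr 1
  refine Finset.sum_congr rfl fun μ _ => ?_
  rw [star_star]
  ring

end KnillLaflamme

lemma sum_mul_sum_mul_conjTranspose {n κ α : Type*} [Fintype n] [Fintype κ]
    (R : κ → Matrix n n ℂ) (s : Finset α) (f : α → Matrix n n ℂ) :
    ∑ c, R c * (∑ x ∈ s, f x) * (R c)ᴴ = ∑ x ∈ s, ∑ c, R c * f x * (R c)ᴴ := by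
  simp only [Finset.mul_sum, Finset.sum_mul]
  exact Finset.sum_comm

lemma sum_comm_pairs {β K A N M : Type*} [AddCommMonoid β] [Fintype K] [Fintype A] [Fintype N]
    [Fintype M] (f : K → A → N → M → β) :
    ∑ k, ∑ a, ∑ n, ∑ m, f k a n m = ∑ n, ∑ m, ∑ a, ∑ k, f k a n m :=
  calc ∑ k, ∑ a, ∑ n, ∑ m, f k a n m = ∑ k, ∑ n, ∑ m, ∑ a, f k a n m :=
        Finset.sum_congr rfl fun _ _ =>
          Finset.sum_comm.trans (Finset.sum_congr rfl fun _ _ => Finset.sum_comm)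
    _ = ∑ n, ∑ m, ∑ k, ∑ a, f k a n m :=
        Finset.sum_comm.trans (Finset.sum_congr rfl fun _ _ => Finset.sum_comm)
    _ = ∑ n, ∑ m, ∑ a, ∑ k, f k a n m :=
        Finset.sum_congr rfl fun _ _ => Finset.sum_congr rfl fun _ _ => Finset.sum_comm

section PartialMatrixElements

variable {dS dB : ℕ}

local notation "Op" => Matrix (Fin dS × Fin dB) (Fin dS × Fin dB) ℂ
local notation "𝟙B" => (1 : Matrix (Fin dB) (Fin dB) ℂ)

lemma trB_eq_sum_pmel (M : Op) : trB M = ∑ k, pmel M k k := by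
  ext i j
  simp [trB, pmel, Matrix.sum_apply]

lemma pmel_sum {α : Type*} (s : Finset α) (f : α → Op) (k ℓ : Fin dB) :
    pmel (∑ a ∈ s, f a) k ℓ = ∑ a ∈ s, pmel (f a) k ℓ := by
  ext i j
  simp [pmel, Matrix.sum_apply]

lemma trB_sum {α : Type*} (s : Finset α) (f : α → Op) :
    trB (∑ a ∈ s, f a) = ∑ a ∈ s, trB (f a) := by
  simp only [trB_eq_sum_pmel, pmel_sum]
  exact Finset.sum_comm

lemma pmel_smul (c : ℂ) (M : Op) (k ℓ : Fin dB) :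
    pmel (c • M) k ℓ = c • pmel M k ℓ := by
  ext i j
  simp [pmel]

lemma pmel_mul (M N : Op) (k ℓ : Fin dB) :
    pmel (M * N) k ℓ = ∑ m, pmel M k m * pmel N m ℓ := by
  ext i j
  simp only [pmel, mul_apply, Matrix.sum_apply, of_apply, Fintype.sum_prod_type]
  exact Finset.sum_comm

lemma pmel_conjTranspose (M : Op) (k ℓ : Fin dB) : pmel Mᴴ k ℓ = (pmel M ℓ k)ᴴ := by
  ext i j
  simp [pmel, conjTranspose_apply]

lemma pmel_kronecker_one (S : Matrix (Fin dS) (Fin dS) ℂ) (k ℓ : Fin dB) :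
    pmel (S ⊗ₖ 𝟙B) k ℓ = if k = ℓ then S else 0 := by
  ext i j
  by_cases h : k = ℓ <;> simp [pmel, kroneckerMap_apply, one_apply, h]

lemma pmel_kronecker_one_mul (S : Matrix (Fin dS) (Fin dS) ℂ) (M : Op) (k ℓ : Fin dB) :
    pmel ((S ⊗ₖ 𝟙B) * M) k ℓ = S * pmel M k ℓ := by
  simp [pmel_mul, pmel_kronecker_one]

lemma pmel_mul_kronecker_one (S : Matrix (Fin dS) (Fin dS) ℂ) (M : Op) (k ℓ : Fin dB) :
    pmel (M * (S ⊗ₖ 𝟙B)) k ℓ = pmel M k ℓ * S := by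
  simp [pmel_mul, pmel_kronecker_one]

lemma pmel_kronecker_one_mul_mul (S T : Matrix (Fin dS) (Fin dS) ℂ) (M : Op) (k ℓ : Fin dB) :
    pmel ((S ⊗ₖ 𝟙B) * M * (T ⊗ₖ 𝟙B)) k ℓ = S * pmel M k ℓ * T := by
  rw [pmel_mul_kronecker_one, pmel_kronecker_one_mul]

lemma trB_kronecker_one_mul_mul (S T : Matrix (Fin dS) (Fin dS) ℂ) (M : Op) :
    trB ((S ⊗ₖ 𝟙B) * M * (T ⊗ₖ 𝟙B)) = S * trB M * T := by
  simp only [trB_eq_sum_pmel, pmel_kronecker_one_mul_mul, Finset.mul_sum, Finset.sum_mul]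

lemma trB_sum_mul_mul_conjTranspose {ι : Type*} [Fintype ι] (E : ι → Op) (ρ : Op) :
    trB (∑ a, E a * ρ * (E a)ᴴ) =
      ∑ k, ∑ a, ∑ n, ∑ m, pmel (E a) k m * pmel ρ m n * (pmel (E a) k n)ᴴ := by
  simp only [trB_eq_sum_pmel, pmel_sum, pmel_mul, pmel_conjTranspose, Finset.sum_mul]

lemma sum_smul_eq_ite_of_normalization {ι : Type*} [Fintype ι] {P : Matrix (Fin dS) (Fin dS) ℂ}
    {E : ι → Op} {Λ : ι × Fin dB × Fin dB → ι × Fin dB × Fin dB → ℂ} {c : ℂ}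
    (hsub : (P ⊗ₖ 𝟙B) * (∑ a, (E a)ᴴ * E a) * (P ⊗ₖ 𝟙B) = c • (P ⊗ₖ 𝟙B))
    (hKL : ∀ a k m n, P * (pmel (E a) k m)ᴴ * pmel (E a) k n * P = Λ (a, k, m) (a, k, n) • P)
    (m n : Fin dB) :
    (∑ a, ∑ k, Λ (a, k, m) (a, k, n)) • P = if m = n then c • P else 0 := by
  have h := congrArg (pmel · m n) hsub
  simp only [pmel_kronecker_one_mul_mul, pmel_smul, pmel_kronecker_one, smul_ite,
    smul_zero] at h
  simp only [pmel_sum, pmel_mul, pmel_conjTranspose] at h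
  rw [← h]
  simp only [Finset.mul_sum, Finset.sum_mul, Finset.sum_smul, ← mul_assoc, hKL]

end PartialMatrixElements

theorem stmt_11_general {dS dB : ℕ} {ι : Type*} [Fintype ι]
    (PC : Matrix (Fin dS) (Fin dS) ℂ)
    (hPCH : PC.IsHermitian) (hPCproj : PC * PC = PC)
    (E : ι → Matrix (Fin dS × Fin dB) (Fin dS × Fin dB) ℂ)
    (γ : ℝ)
    (hsub : (PC ⊗ₖ (1 : Matrix (Fin dB) (Fin dB) ℂ)) * (∑ a, (E a)ᴴ * E a) *
        (PC ⊗ₖ (1 : Matrix (Fin dB) (Fin dB) ℂ))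
      = ((γ : ℂ) ^ 2) • (PC ⊗ₖ (1 : Matrix (Fin dB) (Fin dB) ℂ)))
    (Λ : (ι × Fin dB × Fin dB) → (ι × Fin dB × Fin dB) → ℂ)
    (hΛH : ∀ p q, Λ p q = star (Λ q p))
    (hKL : ∀ a b k ℓ m n, PC * (pmel (E a) k ℓ)ᴴ * pmel (E b) m n * PC
        = Λ (a, k, ℓ) (b, m, n) • PC) :
    ∃ (κ : Type) (_ : Fintype κ) (R : κ → Matrix (Fin dS) (Fin dS) ℂ),
      (∑ c, (R c)ᴴ * R c = 1) ∧
      ∀ ρ : Matrix (Fin dS × Fin dB) (Fin dS × Fin dB) ℂ,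
        ρ.PosSemidef → ρ.trace = 1 →
        (PC ⊗ₖ (1 : Matrix (Fin dB) (Fin dB) ℂ)) * ρ *
          (PC ⊗ₖ (1 : Matrix (Fin dB) (Fin dB) ℂ)) = ρ →
        trB (∑ c, (R c ⊗ₖ (1 : Matrix (Fin dB) (Fin dB) ℂ)) *
              (∑ a, E a * ρ * (E a)ᴴ) *
              (R c ⊗ₖ (1 : Matrix (Fin dB) (Fin dB) ℂ))ᴴ)
          = ((γ : ℂ) ^ 2) • trB ρ := by
  classical
  obtain ⟨κ, _, R, hR, hrec⟩ := exists_recovery_of_knillLaflamme hPCH hPCproj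
    (F := fun p : ι × Fin dB × Fin dB => pmel (E p.1) p.2.1 p.2.2) (Λ := Matrix.of Λ)
    (by ext p q; simp [hΛH q p]) (fun p q => hKL _ _ _ _ _ _)
  refine ⟨κ, ‹_›, R, hR, fun ρ _ _ hρ => ?_⟩
  have hcode (m n : Fin dB) : PC * pmel ρ m n * PC = pmel ρ m n := by
    simpa only [pmel_kronecker_one_mul_mul] using congrArg (pmel · m n) hρ
  have hnorm := sum_smul_eq_ite_of_normalization hsub fun a k m n => hKL a a k m k n
  calc trB (∑ c, (R c ⊗ₖ (1 : Matrix (Fin dB) (Fin dB) ℂ)) * (∑ a, E a * ρ * (E a)ᴴ) *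
          (R c ⊗ₖ (1 : Matrix (Fin dB) (Fin dB) ℂ))ᴴ)
      = ∑ c, R c * trB (∑ a, E a * ρ * (E a)ᴴ) * (R c)ᴴ := by
        simp only [trB_sum, conjTranspose_kronecker, conjTranspose_one, trB_kronecker_one_mul_mul]
    _ = ∑ k, ∑ a, ∑ n, ∑ m, ∑ c,
          R c * (pmel (E a) k m * pmel ρ m n * (pmel (E a) k n)ᴴ) * (R c)ᴴ := by
        simp only [trB_sum_mul_mul_conjTranspose, sum_mul_sum_mul_conjTranspose]
    _ = ∑ k, ∑ a, ∑ n, ∑ m, Λ (a, k, n) (a, k, m) • pmel ρ m n := by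
        refine Finset.sum_congr rfl fun k _ => Finset.sum_congr rfl fun a _ =>
          Finset.sum_congr rfl fun n _ => Finset.sum_congr rfl fun m _ => ?_
        exact hrec (a, k, m) (a, k, n) _ (hcode m n)
    _ = ∑ n, ∑ m, ((∑ a, ∑ k, Λ (a, k, n) (a, k, m)) • PC) * pmel ρ m n * PC := by
        rw [sum_comm_pairs]
        simp only [smul_mul_assoc, hcode, ← Finset.sum_smul]
    _ = ((γ : ℂ) ^ 2) • trB ρ := by
        simp only [hnorm, ite_mul, zero_mul, smul_mul_assoc, hcode, Finset.sum_ite_eq,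
          Finset.mem_univ, if_true, trB_eq_sum_pmel, Finset.smul_sum]

/-- Sub-trace-preserving version of the OSQEC theorem: if the CP map `E ~ {E_a}`
satisfies `P (Σ_a E_a† E_a) P = γ² P` on the code (`γ > 0`) and the OSQEC
conditions hold with a Hermitian `Λ`, then there is a CPTP recovery
`R = R_S ⊗ id_B` with `Tr_B{(R∘E)(ρ)} = γ² Tr_B{ρ}` for all code states `ρ`. -/
theorem stmt_11 {dS dB : ℕ} {ι : Type*} [Fintype ι]
    (PC : Matrix (Fin dS) (Fin dS) ℂ)
    (hPCH : PC.IsHermitian) (hPCproj : PC * PC = PC)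
    (E : ι → Matrix (Fin dS × Fin dB) (Fin dS × Fin dB) ℂ)
    (γ : ℝ) (hγ : 0 < γ)
    (hsub : (PC ⊗ₖ (1 : Matrix (Fin dB) (Fin dB) ℂ)) * (∑ a, (E a)ᴴ * E a) *
        (PC ⊗ₖ (1 : Matrix (Fin dB) (Fin dB) ℂ))
      = ((γ : ℂ) ^ 2) • (PC ⊗ₖ (1 : Matrix (Fin dB) (Fin dB) ℂ)))
    (Λ : (ι × Fin dB × Fin dB) → (ι × Fin dB × Fin dB) → ℂ)
    (hΛH : ∀ p q, Λ p q = star (Λ q p))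
    (hKL : ∀ a b k ℓ m n, PC * (pmel (E a) k ℓ)ᴴ * pmel (E b) m n * PC
        = Λ (a, k, ℓ) (b, m, n) • PC) :
    ∃ (κ : Type) (_ : Fintype κ) (R : κ → Matrix (Fin dS) (Fin dS) ℂ),
      (∑ c, (R c)ᴴ * R c = 1) ∧
      ∀ ρ : Matrix (Fin dS × Fin dB) (Fin dS × Fin dB) ℂ,
        ρ.PosSemidef → ρ.trace = 1 →
        (PC ⊗ₖ (1 : Matrix (Fin dB) (Fin dB) ℂ)) * ρ *
          (PC ⊗ₖ (1 : Matrix (Fin dB) (Fin dB) ℂ)) = ρ →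
        trB (∑ c, (R c ⊗ₖ (1 : Matrix (Fin dB) (Fin dB) ℂ)) *
              (∑ a, E a * ρ * (E a)ᴴ) *
              (R c ⊗ₖ (1 : Matrix (Fin dB) (Fin dB) ℂ))ᴴ)
          = ((γ : ℂ) ^ 2) • trB ρ :=
  stmt_11_general PC hPCH hPCproj E γ hsub Λ hΛH hKL

end OSQEC11
end

section
/- Let ρ be a state on H_S ⊗ H_B with ρ = PρP (P = P_C ⊗ 1_B), and write ρ = Σ_{k,ℓ} ρ_{kℓ} ⊗ |k⟩⟨ℓ| with ρ_{kℓ} = P_C ρ_{kℓ} P_C. Suppose E ∼ {E_a} is CPTP with E_a = Ẽ_a + B_a where Ẽ satisfies the diagonal perfect OSQEC conditions via orthonormal operators {F_α} (i.e., ⟨k|Ẽ_a|ℓ⟩P_C = Σ_α e_{akℓ,α} F_α P_C and P_C F_α† F_β P_C = δ_{αβ}P_C). Then with recovery R_S ∼ {P_C F_α†}, the recovered system state satisfies Tr_B{((R_S⊗id)∘E)(ρ)} = Tr_B{ρ} + (1/2)Σ_{ℓ,m}[ρ_{ℓm}, Θ_{mℓ}] − (1/2)Σ_{ℓ,m}{ρ_{ℓm},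 Δ_{mℓ}} + Σ_{a,k,ℓ,m} Σ_α D_{αa;kℓ} ρ_{ℓm} D_{αa;km}†, where Θ := Σ_a P(B_a†Ẽ_a − Ẽ_a†B_a)P, Δ := Σ_a P B_a† B_a P, Θ_{mℓ} := ⟨m|Θ|ℓ⟩, Δ_{mℓ} := ⟨m|Δ|ℓ⟩, and D_{αa;kℓ} := P_C F_α† ⟨k|B_a|ℓ⟩ P_C. -/
/-!
Everything is computed block by block in the bath basis: `Tr_B` of the recovered state is
`Σ_{a,k,ℓ,m,α} P_C F_α† ⟨k|E_a|ℓ⟩ ρ_{ℓm} ⟨k|E_a|m⟩† F_α P_C`. Because `ρ_{ℓm} = P_C ρ_{ℓm} P_C`,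
each factor may be compressed to the code, and there orthonormality of the `F_α` gives
`P_C F_α† ⟨k|Ẽ_a|ℓ⟩ P_C = e_{akℓ,α} P_C`. Each block therefore splits into a scalar multiple
`c ρ_{ℓm}` of the input, two cross terms between `Ẽ_a` and `B_a`, and the `D ρ D†` term.
Compressing trace preservation `Σ_a E_a† E_a = 1` to the `(m, ℓ)` code block gives
`c P_C + A₁ + A₂ + Δ_{mℓ} = δ_{mℓ} P_C`, with `A₁, A₂` the cross terms and `Θ_{mℓ} = A₂ - A₁`.
Multiplying this by `ρ_{ℓm}` on the left and on the right and averaging trades the scalar and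
cross terms for `δ_{mℓ} ρ_{ℓm} + ½[ρ_{ℓm}, Θ_{mℓ}] - ½{ρ_{ℓm}, Δ_{mℓ}}`.
-/

open Matrix
open scoped BigOperators Kronecker ComplexOrder

namespace OSQEC12

noncomputable def trB {dS dB : ℕ}
    (M : Matrix (Fin dS × Fin dB) (Fin dS × Fin dB) ℂ) :
    Matrix (Fin dS) (Fin dS) ℂ :=
  Matrix.of fun i j => ∑ k : Fin dB, M (i, k) (j, k)

/-- The partial matrix element `⟨k|M|ℓ⟩`. -/
def pmel {dS dB : ℕ} (M : Matrix (Fin dS × Fin dB) (Fin dS × Fin dB) ℂ)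
    (k ℓ : Fin dB) : Matrix (Fin dS) (Fin dS) ℂ :=
  Matrix.of fun i j => M (i, k) (j, ℓ)

theorem sum_sum_comm_sum_sum {M : Type*} [AddCommMonoid M] {α β γ δ : Type*}
    [Fintype α] [Fintype β] [Fintype γ] [Fintype δ] (f : α → β → γ → δ → M) :
    ∑ a, ∑ b, ∑ c, ∑ d, f a b c d = ∑ c, ∑ d, ∑ a, ∑ b, f a b c d :=
  calc ∑ a, ∑ b, ∑ c, ∑ d, f a b c d = ∑ a, ∑ c, ∑ d, ∑ b, f a b c d :=
        Finset.sum_congr rfl fun _ _ =>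
          Finset.sum_comm.trans (Finset.sum_congr rfl fun _ _ => Finset.sum_comm)
    _ = ∑ c, ∑ d, ∑ a, ∑ b, f a b c d :=
        Finset.sum_comm.trans (Finset.sum_congr rfl fun _ _ => Finset.sum_comm)

theorem _root_.IsIdempotentElem.mul_eq_self_of_mul_mul_eq_self {M : Type*} [Semigroup M]
    {p σ : M} (hp : IsIdempotentElem p) (hσ : p * σ * p = σ) : p * σ = σ := by
  rw [← hσ, ← mul_assoc, ← mul_assoc, hp.eq]

theorem _root_.IsIdempotentElem.mul_eq_self_of_mul_mul_eq_self' {M : Type*} [Semigroup M]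
    {p σ : M} (hp : IsIdempotentElem p) (hσ : p * σ * p = σ) : σ * p = σ := by
  rw [← hσ, mul_assoc, hp.eq]

def IsOrthonormalOn {A κ : Type*} [Mul A] [Star A] [SMul ℂ A] [DecidableEq κ] (P : A)
    (F : κ → A) : Prop :=
  ∀ α β, P * star (F α) * F β * P = (if α = β then (1 : ℂ) else 0) • P

section StarAlgebra

variable {A : Type*} [Ring A] [Algebra ℂ A] {κ : Type*} [Fintype κ] {P : A} {F : κ → A}

theorem sum_smul_mul_mul_eq {X : A} {e : κ → ℂ} (hX : X * P = ∑ α, e α • (F α * P)) (Z : A) :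
    ∑ α, e α • (Z * F α * P) = Z * X * P := by
  simp only [mul_assoc, hX, Finset.mul_sum, mul_smul_comm]

theorem smul_add_mul_add_mul_eq {σ A₁ A₂ Δ : A} {c δ : ℂ} (hPσ : P * σ = σ) (hσP : σ * P = σ)
    (h : c • P + A₁ + A₂ + Δ = δ • P) :
    c • σ + σ * A₂ + A₁ * σ
      = δ • σ + (1 / 2 : ℂ) • (σ * (A₂ - A₁) - (A₂ - A₁) * σ)
        - (1 / 2 : ℂ) • (σ * Δ + Δ * σ) := by
  have hl := congrArg (· * σ) h
  have hr := congrArg (σ * ·) h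
  simp only [add_mul, mul_add, smul_mul_assoc, mul_smul_comm, hPσ, hσP] at hl hr
  simp only [mul_sub, sub_mul]
  linear_combination (norm := module) (1 / 2 : ℂ) • (hl + hr)

variable [StarRing A]

theorem mul_star_mul_mul_eq_smul [DecidableEq κ]
    (hF : IsOrthonormalOn P F)
    {X : A} {e : κ → ℂ} (hX : X * P = ∑ α, e α • (F α * P)) (α : κ) :
    P * star (F α) * X * P = e α • P := by
  rw [mul_assoc _ X, hX, Finset.mul_sum]
  simp [← mul_assoc, hF α]

variable [StarModule ℂ A]

theorem sum_star_smul_mul_star_mul_eq (hP : IsSelfAdjoint P) {X : A} {e : κ → ℂ}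
    (hX : X * P = ∑ α, e α • (F α * P)) (Z : A) :
    ∑ α, star (e α) • (P * star (F α) * Z) = P * star X * Z := by
  have h := congrArg star hX
  simp only [star_mul, hP.star_eq, star_sum, star_smul] at h
  rw [h]
  simp only [Finset.sum_mul, smul_mul_assoc]

variable [DecidableEq κ]

theorem mul_star_mul_mul_eq_sum_smul (hP : IsSelfAdjoint P) (hF : IsOrthonormalOn P F)
    {X X' : A} {e e' : κ → ℂ} (hX : X * P = ∑ α, e α • (F α * P))
    (hX' : X' * P = ∑ α, e' α • (F α * P)) :
    P * star X' * X * P = (∑ α, e α * star (e' α)) • P := by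
  rw [mul_assoc _ X, ← sum_star_smul_mul_star_mul_eq hP hX', Finset.sum_smul]
  simp only [← mul_assoc, mul_star_mul_mul_eq_smul hF hX, smul_smul, mul_comm]

theorem mul_star_add_mul_add_mul_eq (hP : IsSelfAdjoint P) (hF : IsOrthonormalOn P F)
    {X X' : A} {e e' : κ → ℂ} (hX : X * P = ∑ α, e α • (F α * P))
    (hX' : X' * P = ∑ α, e' α • (F α * P)) (Y Y' : A) :
    P * star (X' + Y') * (X + Y) * P
      = (∑ α, e α * star (e' α)) • P + P * star X' * Y * P + P * star Y' * X * P
        + P * star Y' * Y * P := by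
  rw [← mul_star_mul_mul_eq_sum_smul hP hF hX hX']
  simp only [star_add, mul_add, add_mul]
  abel

theorem mul_star_mul_add_mul_mul_star_eq (hP : IsStarProjection P) (hF : IsOrthonormalOn P F)
    {X X' : A} {e e' : κ → ℂ} (hX : X * P = ∑ α, e α • (F α * P))
    (hX' : X' * P = ∑ α, e' α • (F α * P)) {σ : A} (hσ : P * σ * P = σ) (Y Y' : A) (α : κ) :
    P * star (F α) * (X + Y) * σ * star (P * star (F α) * (X' + Y'))
      = (e α * star (e' α)) • σ + e α • (σ * (P * star Y' * F α * P))
        + star (e' α) • (P * star (F α) * Y * P * σ)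
        + P * star (F α) * Y * P * σ * star (P * star (F α) * Y' * P) := by
  have hPσ := hP.isIdempotentElem.mul_eq_self_of_mul_mul_eq_self hσ
  have hσP := hP.isIdempotentElem.mul_eq_self_of_mul_mul_eq_self' hσ
  have hcoeff : ∀ {Z : A} {c : κ → ℂ}, Z * P = ∑ α, c α • (F α * P) → ∀ W,
      P * star (F α) * (Z + W) * P = c α • P + P * star (F α) * W * P := by
    intro Z c hZ W
    rw [mul_add, add_mul, mul_star_mul_mul_eq_smul hF hZ]
  have hsandwich : ∀ Z W, P * star (F α) * Z * σ * star (P * star (F α) * W)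
      = P * star (F α) * Z * P * σ * star (P * star (F α) * W * P) := by
    intro Z W
    conv_lhs => rw [← hσ]
    simp only [star_mul, hP.isSelfAdjoint.star_eq, mul_assoc]
  rw [hsandwich, hcoeff hX, hcoeff hX']
  simp only [star_add, star_smul, star_mul, star_star, hP.isSelfAdjoint.star_eq, add_mul,
    mul_add, smul_mul_assoc, mul_smul_comm, hPσ, mul_assoc, hσP]
  module

theorem sum_mul_star_mul_add_mul_mul_star_eq (hP : IsStarProjection P) (hF : IsOrthonormalOn P F)
    {X X' : A} {e e' : κ → ℂ} (hX : X * P = ∑ α, e α • (F α * P))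
    (hX' : X' * P = ∑ α, e' α • (F α * P)) {σ : A} (hσ : P * σ * P = σ) (Y Y' : A) :
    ∑ α, P * star (F α) * (X + Y) * σ * star (P * star (F α) * (X' + Y'))
      = (∑ α, e α * star (e' α)) • σ + σ * (P * star Y' * X * P) + P * star X' * Y * P * σ
        + ∑ α, P * star (F α) * Y * P * σ * star (P * star (F α) * Y' * P) := by
  rw [Finset.sum_congr rfl fun α _ => mul_star_mul_add_mul_mul_star_eq hP hF hX hX' hσ Y Y' α,
    ← sum_smul_mul_mul_eq hX, mul_assoc (P * star X'),
    ← sum_star_smul_mul_star_mul_eq hP.isSelfAdjoint hX']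
  simp only [Finset.sum_add_distrib, Finset.sum_smul, Finset.mul_sum, Finset.sum_mul,
    mul_smul_comm, smul_mul_assoc, mul_assoc]

theorem sum_sum_sum_mul_star_mul_add_mul_mul_star_eq {ι K : Type*} [Fintype ι] [Fintype K]
    (hP : IsStarProjection P) (hF : IsOrthonormalOn P F)
    {X X' Y Y' : ι → K → A} {e e' : ι → K → κ → ℂ}
    (hX : ∀ a k, X a k * P = ∑ α, e a k α • (F α * P))
    (hX' : ∀ a k, X' a k * P = ∑ α, e' a k α • (F α * P)) {σ : A} (hσ : P * σ * P = σ)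
    {δ : ℂ} (hTP : ∑ a, ∑ k, P * star (X' a k + Y' a k) * (X a k + Y a k) * P = δ • P)
    {Θ Δ : A}
    (hΘ : Θ = ∑ a, ∑ k, P * star (Y' a k) * X a k * P - ∑ a, ∑ k, P * star (X' a k) * Y a k * P)
    (hΔ : Δ = ∑ a, ∑ k, P * star (Y' a k) * Y a k * P) :
    ∑ a, ∑ k, ∑ α, P * star (F α) * (X a k + Y a k) * σ * star (P * star (F α) * (X' a k + Y' a k))
      = δ • σ + (1 / 2 : ℂ) • (σ * Θ - Θ * σ) - (1 / 2 : ℂ) • (σ * Δ + Δ * σ)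
        + ∑ a, ∑ k, ∑ α, P * star (F α) * Y a k * P * σ * star (P * star (F α) * Y' a k * P) := by
  subst hΘ hΔ
  simp only [sum_mul_star_mul_add_mul_mul_star_eq hP hF (hX _ _) (hX' _ _) hσ,
    Finset.sum_add_distrib]
  congr 1
  simp only [← Finset.sum_smul, ← Finset.mul_sum, ← Finset.sum_mul]
  refine smul_add_mul_add_mul_eq (hP.isIdempotentElem.mul_eq_self_of_mul_mul_eq_self hσ)
    (hP.isIdempotentElem.mul_eq_self_of_mul_mul_eq_self' hσ) ?_
  rw [← hTP]
  simp only [mul_star_add_mul_add_mul_eq hP.isSelfAdjoint hF (hX _ _) (hX' _ _),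
    Finset.sum_add_distrib, Finset.sum_smul, Finset.sum_mul]

end StarAlgebra

section PartialMatrixElement

variable {dS dB : ℕ}

theorem pmel_add (M N : Matrix (Fin dS × Fin dB) (Fin dS × Fin dB) ℂ) (k ℓ : Fin dB) :
    pmel (M + N) k ℓ = pmel M k ℓ + pmel N k ℓ :=
  rfl

theorem pmel_sub (M N : Matrix (Fin dS × Fin dB) (Fin dS × Fin dB) ℂ) (k ℓ : Fin dB) :
    pmel (M - N) k ℓ = pmel M k ℓ - pmel N k ℓ :=
  rfl

theorem pmel_conjTranspose (M : Matrix (Fin dS × Fin dB) (Fin dS × Fin dB) ℂ) (k ℓ : Fin dB) :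
    pmel Mᴴ k ℓ = (pmel M ℓ k)ᴴ :=
  rfl

theorem pmel_sum {γ : Type*} (s : Finset γ)
    (M : γ → Matrix (Fin dS × Fin dB) (Fin dS × Fin dB) ℂ) (k ℓ : Fin dB) :
    pmel (∑ x ∈ s, M x) k ℓ = ∑ x ∈ s, pmel (M x) k ℓ := by
  ext i j
  simp [pmel, Matrix.sum_apply]

theorem pmel_one (k ℓ : Fin dB) :
    pmel (1 : Matrix (Fin dS × Fin dB) (Fin dS × Fin dB) ℂ) k ℓ = if k = ℓ then 1 else 0 := by
  ext i j
  by_cases h : k = ℓ <;> simp [pmel, Matrix.one_apply, h]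

theorem pmel_mul (M N : Matrix (Fin dS × Fin dB) (Fin dS × Fin dB) ℂ) (k ℓ : Fin dB) :
    pmel (M * N) k ℓ = ∑ m, pmel M k m * pmel N m ℓ := by
  ext i j
  simp only [pmel, Matrix.of_apply, Matrix.mul_apply, Matrix.sum_apply, Fintype.sum_prod_type]
  exact Finset.sum_comm

theorem pmel_kronecker_one_mul (X : Matrix (Fin dS) (Fin dS) ℂ)
    (M : Matrix (Fin dS × Fin dB) (Fin dS × Fin dB) ℂ) (k ℓ : Fin dB) :
    pmel ((X ⊗ₖ (1 : Matrix (Fin dB) (Fin dB) ℂ)) * M) k ℓ = X * pmel M k ℓ := by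
  ext i j
  simp [pmel, Matrix.mul_apply, Fintype.sum_prod_type, Matrix.one_apply]

theorem pmel_mul_kronecker_one (M : Matrix (Fin dS × Fin dB) (Fin dS × Fin dB) ℂ)
    (X : Matrix (Fin dS) (Fin dS) ℂ) (k ℓ : Fin dB) :
    pmel (M * (X ⊗ₖ (1 : Matrix (Fin dB) (Fin dB) ℂ))) k ℓ = pmel M k ℓ * X := by
  ext i j
  simp [pmel, Matrix.mul_apply, Fintype.sum_prod_type, Matrix.one_apply]

theorem pmel_kronecker_one_mul_mul_kronecker_one (X Y : Matrix (Fin dS) (Fin dS) ℂ)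
    (M : Matrix (Fin dS × Fin dB) (Fin dS × Fin dB) ℂ) (k ℓ : Fin dB) :
    pmel ((X ⊗ₖ (1 : Matrix (Fin dB) (Fin dB) ℂ)) * M * (Y ⊗ₖ (1 : Matrix (Fin dB) (Fin dB) ℂ)))
        k ℓ = X * pmel M k ℓ * Y := by
  rw [pmel_mul_kronecker_one, pmel_kronecker_one_mul]

theorem pmel_sum_kronecker_one_mul_conjTranspose_mul_mul_kronecker_one {ι : Type*} [Fintype ι]
    (X Y : Matrix (Fin dS) (Fin dS) ℂ) (M N : ι → Matrix (Fin dS × Fin dB) (Fin dS × Fin dB) ℂ)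
    (m ℓ : Fin dB) :
    pmel (∑ a, (X ⊗ₖ (1 : Matrix (Fin dB) (Fin dB) ℂ)) * ((M a)ᴴ * N a) *
        (Y ⊗ₖ (1 : Matrix (Fin dB) (Fin dB) ℂ))) m ℓ
      = ∑ a, ∑ k, X * (pmel (M a) k m)ᴴ * pmel (N a) k ℓ * Y := by
  simp only [pmel_sum, pmel_kronecker_one_mul_mul_kronecker_one]
  simp only [pmel_mul, pmel_conjTranspose, Finset.mul_sum, Finset.sum_mul, mul_assoc]

theorem sum_sum_mul_pmel_conjTranspose_mul_pmel_mul {ι : Type*} [Fintype ι]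
    {E : ι → Matrix (Fin dS × Fin dB) (Fin dS × Fin dB) ℂ} (hTP : ∑ a, (E a)ᴴ * E a = 1)
    {X : Matrix (Fin dS) (Fin dS) ℂ} (hX : X * X = X) (m ℓ : Fin dB) :
    ∑ a, ∑ k, X * (pmel (E a) k m)ᴴ * pmel (E a) k ℓ * X = (if m = ℓ then (1 : ℂ) else 0) • X := by
  have h := congrArg (fun M => pmel M m ℓ) hTP
  simp only [pmel_sum, pmel_mul, pmel_conjTranspose, pmel_one] at h
  calc ∑ a, ∑ k, X * (pmel (E a) k m)ᴴ * pmel (E a) k ℓ * X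
      = X * (∑ a, ∑ k, (pmel (E a) k m)ᴴ * pmel (E a) k ℓ) * X := by
        simp only [Finset.mul_sum, Finset.sum_mul, mul_assoc]
    _ = (if m = ℓ then (1 : ℂ) else 0) • X := by
        rw [h]
        split_ifs <;> simp [hX]

theorem trB_eq_sum_pmel (M : Matrix (Fin dS × Fin dB) (Fin dS × Fin dB) ℂ) :
    trB M = ∑ k, pmel M k k := by
  ext i j
  simp [trB, pmel, Matrix.sum_apply]

theorem trB_sum {γ : Type*} (s : Finset γ)
    (M : γ → Matrix (Fin dS × Fin dB) (Fin dS × Fin dB) ℂ) :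
    trB (∑ x ∈ s, M x) = ∑ x ∈ s, trB (M x) := by
  simp only [trB_eq_sum_pmel, pmel_sum]
  exact Finset.sum_comm

theorem trB_mul_mul_conjTranspose (K M : Matrix (Fin dS × Fin dB) (Fin dS × Fin dB) ℂ) :
    trB (K * M * Kᴴ) = ∑ k, ∑ ℓ, ∑ m, pmel K k ℓ * pmel M ℓ m * (pmel K k m)ᴴ := by
  simp only [trB_eq_sum_pmel, pmel_mul, pmel_conjTranspose, Finset.sum_mul]
  exact Finset.sum_congr rfl fun _ _ => Finset.sum_comm

theorem trB_sum_kronecker_one_mul_sum_mul_conjTranspose {ι κ : Type*} [Fintype ι] [Fintype κ]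
    (R : κ → Matrix (Fin dS) (Fin dS) ℂ) (E : ι → Matrix (Fin dS × Fin dB) (Fin dS × Fin dB) ℂ)
    (ρ : Matrix (Fin dS × Fin dB) (Fin dS × Fin dB) ℂ) :
    trB (∑ α, (R α ⊗ₖ (1 : Matrix (Fin dB) (Fin dB) ℂ)) * (∑ a, E a * ρ * (E a)ᴴ) *
        (R α ⊗ₖ (1 : Matrix (Fin dB) (Fin dB) ℂ))ᴴ)
      = ∑ a, ∑ k, ∑ ℓ, ∑ m, ∑ α,
          R α * pmel (E a) k ℓ * pmel ρ ℓ m * (R α * pmel (E a) k m)ᴴ := by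
  have hkraus : ∀ (K : Matrix (Fin dS × Fin dB) (Fin dS × Fin dB) ℂ) a,
      K * (E a * ρ * (E a)ᴴ) * Kᴴ = (K * E a) * ρ * (K * E a)ᴴ := by
    intro K a
    simp only [conjTranspose_mul, mul_assoc]
  simp only [Finset.mul_sum, Finset.sum_mul, hkraus, trB_sum, trB_mul_mul_conjTranspose,
    pmel_kronecker_one_mul]
  rw [Finset.sum_comm]
  refine Finset.sum_congr rfl fun a _ => ?_
  rw [Finset.sum_comm]
  refine Finset.sum_congr rfl fun k _ => ?_
  rw [Finset.sum_comm]
  exact Finset.sum_congr rfl fun ℓ _ => Finset.sum_comm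

end PartialMatrixElement

theorem stmt_12_general {dS dB : ℕ} {ι α' : Type*} [Fintype ι] [Fintype α'] [DecidableEq α']
    (PC : Matrix (Fin dS) (Fin dS) ℂ)
    (hPCH : PC.IsHermitian) (hPCproj : PC * PC = PC)
    (E Et B : ι → Matrix (Fin dS × Fin dB) (Fin dS × Fin dB) ℂ)
    (hEB : ∀ a, E a = Et a + B a)
    (hTP : ∑ a, (E a)ᴴ * E a = 1)
    (F : α' → Matrix (Fin dS) (Fin dS) ℂ)
    (hF : ∀ α β, PC * (F α)ᴴ * F β * PC
        = (if α = β then (1 : ℂ) else 0) • PC)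
    (e : ι → Fin dB → Fin dB → α' → ℂ)
    (he : ∀ a k ℓ, pmel (Et a) k ℓ * PC = ∑ α, e a k ℓ α • (F α * PC))
    (Θ Δ : Matrix (Fin dS × Fin dB) (Fin dS × Fin dB) ℂ)
    (hΘ : Θ = ∑ a, (PC ⊗ₖ (1 : Matrix (Fin dB) (Fin dB) ℂ)) *
        ((B a)ᴴ * Et a - (Et a)ᴴ * B a) * (PC ⊗ₖ (1 : Matrix (Fin dB) (Fin dB) ℂ)))
    (hΔ : Δ = ∑ a, (PC ⊗ₖ (1 : Matrix (Fin dB) (Fin dB) ℂ)) *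
        ((B a)ᴴ * B a) * (PC ⊗ₖ (1 : Matrix (Fin dB) (Fin dB) ℂ)))
    (D : α' → ι → Fin dB → Fin dB → Matrix (Fin dS) (Fin dS) ℂ)
    (hD : ∀ α a k ℓ, D α a k ℓ = PC * (F α)ᴴ * pmel (B a) k ℓ * PC)
    (ρ : Matrix (Fin dS × Fin dB) (Fin dS × Fin dB) ℂ)
    (hcode : (PC ⊗ₖ (1 : Matrix (Fin dB) (Fin dB) ℂ)) * ρ *
        (PC ⊗ₖ (1 : Matrix (Fin dB) (Fin dB) ℂ)) = ρ) :
    trB (∑ α, ((PC * (F α)ᴴ) ⊗ₖ (1 : Matrix (Fin dB) (Fin dB) ℂ)) *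
          (∑ a, E a * ρ * (E a)ᴴ) *
          ((PC * (F α)ᴴ) ⊗ₖ (1 : Matrix (Fin dB) (Fin dB) ℂ))ᴴ)
      = trB ρ
        + (1 / 2 : ℂ) • ∑ ℓ, ∑ m,
            (pmel ρ ℓ m * pmel Θ m ℓ - pmel Θ m ℓ * pmel ρ ℓ m)
        - (1 / 2 : ℂ) • ∑ ℓ, ∑ m,
            (pmel ρ ℓ m * pmel Δ m ℓ + pmel Δ m ℓ * pmel ρ ℓ m)
        + ∑ a, ∑ k, ∑ ℓ, ∑ m, ∑ α,
            D α a k ℓ * pmel ρ ℓ m * (D α a k m)ᴴ := by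
  have hP : IsStarProjection PC := ⟨hPCproj, hPCH⟩
  have hσ : ∀ ℓ m, PC * pmel ρ ℓ m * PC = pmel ρ ℓ m := fun ℓ m => by
    rw [← pmel_kronecker_one_mul_mul_kronecker_one, hcode]
  have hlm : ∀ ℓ m, ∑ a, ∑ k, ∑ α, PC * (F α)ᴴ * pmel (E a) k ℓ * pmel ρ ℓ m *
        (PC * (F α)ᴴ * pmel (E a) k m)ᴴ
      = (if m = ℓ then (1 : ℂ) else 0) • pmel ρ ℓ m
        + (1 / 2 : ℂ) • (pmel ρ ℓ m * pmel Θ m ℓ - pmel Θ m ℓ * pmel ρ ℓ m)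
        - (1 / 2 : ℂ) • (pmel ρ ℓ m * pmel Δ m ℓ + pmel Δ m ℓ * pmel ρ ℓ m)
        + ∑ a, ∑ k, ∑ α, D α a k ℓ * pmel ρ ℓ m * (D α a k m)ᴴ := fun ℓ m => by
    simp only [hEB, pmel_add, hD]
    refine sum_sum_sum_mul_star_mul_add_mul_mul_star_eq hP hF (fun a k => he a k ℓ)
      (fun a k => he a k m) (hσ ℓ m) ?_ ?_ ?_
    · simpa only [hEB, pmel_add, star_eq_conjTranspose]
        using sum_sum_mul_pmel_conjTranspose_mul_pmel_mul hTP hPCproj m ℓ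
    · simp only [hΘ, mul_sub, sub_mul, Finset.sum_sub_distrib, pmel_sub,
        pmel_sum_kronecker_one_mul_conjTranspose_mul_mul_kronecker_one, star_eq_conjTranspose]
    · simp only [hΔ, pmel_sum_kronecker_one_mul_conjTranspose_mul_mul_kronecker_one,
        star_eq_conjTranspose]
  rw [trB_sum_kronecker_one_mul_sum_mul_conjTranspose, sum_sum_comm_sum_sum]
  simp only [hlm, Finset.sum_add_distrib, Finset.sum_sub_distrib, ← Finset.smul_sum,
    trB_eq_sum_pmel, ite_smul, one_smul, zero_smul, Finset.sum_ite_eq', Finset.mem_univ, if_true]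
  rw [sum_sum_comm_sum_sum (fun a k ℓ m => ∑ α, D α a k ℓ * pmel ρ ℓ m * (D α a k m)ᴴ)]

/-- The exact expansion (Eq. (13) of the paper) of the recovered system state in
the approximate OSQEC analysis: with `E_a = Ẽ_a + B_a`, `Ẽ` satisfying the
diagonal perfect OSQEC conditions via the orthonormal family `{F_α}`, and the
universal recovery `R_S ~ {P_C F_α†}`,
`Tr_B{((R_S⊗id)∘E)(ρ)} = Tr_B ρ + (1/2)Σ[ρ_{ℓm},Θ_{mℓ}] − (1/2)Σ{ρ_{ℓm},Δ_{mℓ}}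
 + Σ D_{αa;kℓ} ρ_{ℓm} D_{αa;km}†`. -/
theorem stmt_12 {dS dB : ℕ} {ι α' : Type*} [Fintype ι] [Fintype α'] [DecidableEq α']
    (PC : Matrix (Fin dS) (Fin dS) ℂ)
    (hPCH : PC.IsHermitian) (hPCproj : PC * PC = PC)
    (E Et B : ι → Matrix (Fin dS × Fin dB) (Fin dS × Fin dB) ℂ)
    (hEB : ∀ a, E a = Et a + B a)
    (hTP : ∑ a, (E a)ᴴ * E a = 1)
    (F : α' → Matrix (Fin dS) (Fin dS) ℂ)
    (hF : ∀ α β, PC * (F α)ᴴ * F β * PC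
        = (if α = β then (1 : ℂ) else 0) • PC)
    (e : ι → Fin dB → Fin dB → α' → ℂ)
    (he : ∀ a k ℓ, pmel (Et a) k ℓ * PC = ∑ α, e a k ℓ α • (F α * PC))
    (Θ Δ : Matrix (Fin dS × Fin dB) (Fin dS × Fin dB) ℂ)
    (hΘ : Θ = ∑ a, (PC ⊗ₖ (1 : Matrix (Fin dB) (Fin dB) ℂ)) *
        ((B a)ᴴ * Et a - (Et a)ᴴ * B a) * (PC ⊗ₖ (1 : Matrix (Fin dB) (Fin dB) ℂ)))
    (hΔ : Δ = ∑ a, (PC ⊗ₖ (1 : Matrix (Fin dB) (Fin dB) ℂ)) *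
        ((B a)ᴴ * B a) * (PC ⊗ₖ (1 : Matrix (Fin dB) (Fin dB) ℂ)))
    (D : α' → ι → Fin dB → Fin dB → Matrix (Fin dS) (Fin dS) ℂ)
    (hD : ∀ α a k ℓ, D α a k ℓ = PC * (F α)ᴴ * pmel (B a) k ℓ * PC)
    (ρ : Matrix (Fin dS × Fin dB) (Fin dS × Fin dB) ℂ)
    (hρPSD : ρ.PosSemidef) (hρtr : ρ.trace = 1)
    (hcode : (PC ⊗ₖ (1 : Matrix (Fin dB) (Fin dB) ℂ)) * ρ *
        (PC ⊗ₖ (1 : Matrix (Fin dB) (Fin dB) ℂ)) = ρ) :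
    trB (∑ α, ((PC * (F α)ᴴ) ⊗ₖ (1 : Matrix (Fin dB) (Fin dB) ℂ)) *
          (∑ a, E a * ρ * (E a)ᴴ) *
          ((PC * (F α)ᴴ) ⊗ₖ (1 : Matrix (Fin dB) (Fin dB) ℂ))ᴴ)
      = trB ρ
        + (1 / 2 : ℂ) • ∑ ℓ, ∑ m,
            (pmel ρ ℓ m * pmel Θ m ℓ - pmel Θ m ℓ * pmel ρ ℓ m)
        - (1 / 2 : ℂ) • ∑ ℓ, ∑ m,
            (pmel ρ ℓ m * pmel Δ m ℓ + pmel Δ m ℓ * pmel ρ ℓ m)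
        + ∑ a, ∑ k, ∑ ℓ, ∑ m, ∑ α,
            D α a k ℓ * pmel ρ ℓ m * (D α a k m)ᴴ :=
  stmt_12_general PC hPCH hPCproj E Et B hEB hTP F hF e he Θ Δ hΘ hΔ D hD ρ hcode

end OSQEC12
end

section
/- Let |Ψ⟩ = Σ_k μ_k |ψ_k⟩|k⟩ be a Schmidt decomposition of a unit vector in C ⊗ H_B (μ_k ≥ 0), and let Θ be a skew-Hermitian operator on H_S ⊗ H_B (Θ† = −Θ). With ⟨kℓ⟩ := ⟨Ψ|Θ(|ψ_k⟩⊗|ℓ⟩), s_{kℓ} := μ_k²+μ_ℓ², define Tr V := (1/4)[Tr V_1 + Tr V_2 + Tr V_3] where Tr V_1 = −(1/2)Σ_{kℓ} (μ_k³μ_ℓ/s_{kℓ}²)(⟨kℓ⟩⟨ℓk⟩ + c.c.), Tr V_2 = −(1/2)Σ_{kℓ}(μ_k²μ_ℓ²/s_{kℓ}²)|⟨kℓ⟩|², Tr V_3 = −(1/2)Σ_{kℓ}(μ_ℓ⁴/s_{kℓ}²)|⟨kℓ⟩|². Then 0 ≥ Tr V ≥ −((1+√2)/16)·⟨Ψ|Θ†Θ|Ψ⟩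 ≥ −((1+√2)/16)·‖Θ†Θ‖. -/
/-!
Pair the `(k, ℓ)` and `(ℓ, k)` summands of `Tr V`. With `x = μ_k`, `y = μ_ℓ`, `a = |⟨kℓ⟩|`,
`b = |⟨ℓk⟩|` and `r = Re(⟨kℓ⟩⟨ℓk⟩)`, their sum is `-(1/8) (2xyr + y²a² + x²b²) / (x² + y²)`.
Since `|r| ≤ ab`, the numerator is at least `(ya - xb)² ≥ 0`, and at most
`a² (xy + y²) + b² (xy + x²) ≤ (1 + √2)/2 (x² + y²)(a² + b²)`. Summing gives
`-(1 + √2)/16 · Σ_{kℓ} |⟨kℓ⟩|² ≤ Tr V ≤ 0`.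
Next, `⟨kℓ⟩ = ⟨Θ†Ψ | ψ_k ⊗ ℓ⟩`, so Bessel's inequality for the orthonormal `ψ_k` in each slice `ℓ`
bounds `Σ_{kℓ} |⟨kℓ⟩|²` by `‖Θ†Ψ‖² = ‖ΘΨ‖² = ⟨Ψ|Θ†Θ|Ψ⟩`, using `Θ† = -Θ`. The last inequality
holds because `‖Ψ‖ = 1`.
-/

open Matrix

-- `(1 + √2)/2` is the largest eigenvalue of `!![0, 1/2; 1/2, 1]`.
lemma mul_add_sq_le_one_add_sqrt_two_div_two_mul (x y : ℝ) :
    x * y + y ^ 2 ≤ (1 + √2) / 2 * (x ^ 2 + y ^ 2) := by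
  have h2 : √2 ^ 2 = 2 := Real.sq_sqrt (by norm_num)
  nlinarith [sq_nonneg ((1 + √2) * x - y), Real.sqrt_nonneg 2]

lemma sum_sum_le_of_add_swap_le {ι : Type*} [Fintype ι] {F G : ι → ι → ℝ}
    (h : ∀ k ℓ, F k ℓ + F ℓ k ≤ G k ℓ + G ℓ k) :
    ∑ k, ∑ ℓ, F k ℓ ≤ ∑ k, ∑ ℓ, G k ℓ := by
  have hswap (H : ι → ι → ℝ) : ∑ k, ∑ ℓ, (H k ℓ + H ℓ k) = 2 * ∑ k, ∑ ℓ, H k ℓ := by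
    simp only [Finset.sum_add_distrib]
    rw [Finset.sum_comm (f := fun k ℓ => H ℓ k)]
    ring
  have := Finset.sum_le_sum fun k (_ : k ∈ Finset.univ) =>
    Finset.sum_le_sum fun ℓ (_ : ℓ ∈ Finset.univ) => h k ℓ
  linarith [hswap F, hswap G]

lemma sum_sum_nonneg_of_add_swap_nonneg {ι : Type*} [Fintype ι] {G : ι → ι → ℝ}
    (h : ∀ k ℓ, 0 ≤ G k ℓ + G ℓ k) : 0 ≤ ∑ k, ∑ ℓ, G k ℓ := by
  simpa using sum_sum_le_of_add_swap_le (F := fun _ _ => 0) (by simpa using h)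

section RCLike

variable {𝕜 : Type*} [RCLike 𝕜] {m n : Type*} [Fintype m] [Fintype n]

lemma re_star_dotProduct_self (v : n → 𝕜) :
    RCLike.re (star v ⬝ᵥ v) = ∑ i, ‖v i‖ ^ 2 := by
  simp only [dotProduct, Pi.star_apply, RCLike.star_def, RCLike.conj_mul, map_sum]
  norm_cast

lemma re_star_dotProduct_conjTranspose_mul_mulVec (A : Matrix m n 𝕜) (v : n → 𝕜) :
    RCLike.re (star v ⬝ᵥ (Aᴴ * A) *ᵥ v) = ∑ i, ‖(A *ᵥ v) i‖ ^ 2 := by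
  rw [← mulVec_mulVec, dotProduct_mulVec, ← conjTranspose_conjTranspose A, ← star_mulVec,
    conjTranspose_conjTranspose]
  exact re_star_dotProduct_self _

lemma re_star_dotProduct_mulVec_le [DecidableEq n] (M : Matrix n n 𝕜) (v : n → 𝕜) :
    RCLike.re (star v ⬝ᵥ M *ᵥ v) ≤ ‖toEuclideanCLM (𝕜 := 𝕜) M‖ * ∑ i, ‖v i‖ ^ 2 := by
  have hv : ∑ i, ‖v i‖ ^ 2 = ‖(WithLp.toLp 2 v : EuclideanSpace 𝕜 n)‖ ^ 2 := by
    rw [EuclideanSpace.norm_sq_eq]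
  calc RCLike.re (star v ⬝ᵥ M *ᵥ v)
      = RCLike.re (inner 𝕜 (WithLp.toLp 2 v) (toEuclideanCLM (𝕜 := 𝕜) M (WithLp.toLp 2 v))) := by
        rw [toEuclideanCLM_toLp, EuclideanSpace.inner_toLp_toLp, dotProduct_comm]
    _ ≤ ‖WithLp.toLp 2 v‖ * ‖toEuclideanCLM (𝕜 := 𝕜) M (WithLp.toLp 2 v)‖ :=
        re_inner_le_norm _ _
    _ ≤ ‖WithLp.toLp 2 v‖ * (‖toEuclideanCLM (𝕜 := 𝕜) M‖ * ‖WithLp.toLp 2 v‖) := by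
        gcongr; exact ContinuousLinearMap.le_opNorm _ _
    _ = ‖toEuclideanCLM (𝕜 := 𝕜) M‖ * ∑ i, ‖v i‖ ^ 2 := by rw [hv]; ring

lemma sum_norm_sq_dotProduct_le {κ : Type*} [DecidableEq κ] (ψ : κ → n → 𝕜) (s : Finset κ)
    (hψ : ∀ j ∈ s, ∀ k ∈ s, star (ψ j) ⬝ᵥ ψ k = if j = k then 1 else 0) (u : n → 𝕜) :
    ∑ k ∈ s, ‖star (ψ k) ⬝ᵥ u‖ ^ 2 ≤ ∑ i, ‖u i‖ ^ 2 := by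
  have hON : Orthonormal 𝕜 fun k : s => (WithLp.toLp 2 (ψ k) : EuclideanSpace 𝕜 n) := by
    rw [orthonormal_iff_ite]
    rintro ⟨j, hj⟩ ⟨k, hk⟩
    rw [EuclideanSpace.inner_toLp_toLp, dotProduct_comm, hψ j hj k hk]
    simp
  have := hON.sum_inner_products_le (s := Finset.univ) (WithLp.toLp 2 u)
  rw [EuclideanSpace.norm_sq_eq] at this
  simpa [EuclideanSpace.inner_toLp_toLp, dotProduct_comm,
    Finset.sum_attach s (fun k => ‖u ⬝ᵥ star (ψ k)‖ ^ 2)] using this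

lemma sum_sum_norm_sq_dotProduct_tensor_le {κ : Type*} [DecidableEq n] [DecidableEq κ]
    (ψ : κ → m → 𝕜) (s : Finset κ)
    (hψ : ∀ j ∈ s, ∀ k ∈ s, star (ψ j) ⬝ᵥ ψ k = if j = k then 1 else 0) (u : m × n → 𝕜) :
    ∑ ℓ, ∑ k ∈ s, ‖star u ⬝ᵥ (fun p => if p.2 = ℓ then ψ k p.1 else 0)‖ ^ 2
      ≤ ∑ p, ‖u p‖ ^ 2 := by
  have hslice (k : κ) (ℓ : n) : ‖star u ⬝ᵥ (fun p => if p.2 = ℓ then ψ k p.1 else 0)‖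
      = ‖star (ψ k) ⬝ᵥ fun i => u (i, ℓ)‖ := by
    rw [← norm_star, star_dotProduct, star_star]
    simp [dotProduct, Fintype.sum_prod_type_right, mul_comm, apply_ite (starRingEnd 𝕜)]
  rw [Fintype.sum_prod_type_right]
  gcongr with ℓ
  simp_rw [hslice]
  exact sum_norm_sq_dotProduct_le ψ s hψ _

lemma sum_norm_sq_schmidt (ψ : n → m → 𝕜) (μ : n → ℝ) (hnorm : ∑ k, μ k ^ 2 = 1)
    (hψ : ∀ k, μ k ≠ 0 → star (ψ k) ⬝ᵥ ψ k = 1) :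
    ∑ p : m × n, ‖(μ p.2 : 𝕜) * ψ p.2 p.1‖ ^ 2 = 1 := by
  rw [Fintype.sum_prod_type_right, ← hnorm]
  refine Finset.sum_congr rfl fun ℓ _ => ?_
  rcases eq_or_ne (μ ℓ) 0 with h | h
  · simp [h]
  · simp_rw [norm_mul, mul_pow, RCLike.norm_ofReal, sq_abs]
    rw [← Finset.mul_sum, ← re_star_dotProduct_self, hψ ℓ h, RCLike.one_re, mul_one]

end RCLike

-- The `(k, ℓ)` summand of `-2 (Tr V₁ + Tr V₂ + Tr V₃)`, so `Tr V = -(1/8) Σ_{kℓ}` of it.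
noncomputable def traceVSummand (x y : ℝ) (z w : ℂ) : ℝ :=
  (x ^ 3 * y * (2 * (z * w).re) + (x ^ 2 * y ^ 2 + y ^ 4) * ‖z‖ ^ 2) / (x ^ 2 + y ^ 2) ^ 2

lemma traceVSummand_add_swap (x y : ℝ) (z w : ℂ) :
    traceVSummand x y z w + traceVSummand y x w z
      = (2 * x * y * (z * w).re + y ^ 2 * ‖z‖ ^ 2 + x ^ 2 * ‖w‖ ^ 2) / (x ^ 2 + y ^ 2) := by
  rcases eq_or_ne (x ^ 2 + y ^ 2) 0 with h | h
  · simp [traceVSummand, h, add_comm (y ^ 2)]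
  · rw [traceVSummand, traceVSummand, mul_comm w, add_comm (y ^ 2)]
    field_simp
    ring

lemma traceVSummand_add_swap_nonneg {x y : ℝ} (hx : 0 ≤ x) (hy : 0 ≤ y) (z w : ℂ) :
    0 ≤ traceVSummand x y z w + traceVSummand y x w z := by
  have hre : -(‖z‖ * ‖w‖) ≤ (z * w).re := by
    rw [← norm_mul]; exact neg_le_of_abs_le (Complex.abs_re_le_norm _)
  rw [traceVSummand_add_swap]
  apply div_nonneg _ (by positivity)
  nlinarith [mul_le_mul_of_nonneg_left hre (mul_nonneg hx hy), sq_nonneg (y * ‖z‖ - x * ‖w‖)]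

lemma traceVSummand_add_swap_le {x y : ℝ} (hx : 0 ≤ x) (hy : 0 ≤ y) (z w : ℂ) :
    traceVSummand x y z w + traceVSummand y x w z ≤ (1 + √2) / 2 * (‖z‖ ^ 2 + ‖w‖ ^ 2) := by
  have hre : (z * w).re ≤ (‖z‖ ^ 2 + ‖w‖ ^ 2) / 2 := by
    have := Complex.re_le_norm (z * w)
    rw [norm_mul] at this
    nlinarith [sq_nonneg (‖z‖ - ‖w‖)]
  have hxy := mul_add_sq_le_one_add_sqrt_two_div_two_mul x y
  have hyx := mul_add_sq_le_one_add_sqrt_two_div_two_mul y x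
  rw [traceVSummand_add_swap]
  apply div_le_of_le_mul₀ (by positivity) (by positivity)
  nlinarith [mul_le_mul_of_nonneg_left hre (mul_nonneg hx hy),
    mul_le_mul_of_nonneg_left hxy (sq_nonneg ‖z‖), mul_le_mul_of_nonneg_left hyx (sq_nonneg ‖w‖)]

section GuardedSums

variable {ι : Type*} [Fintype ι] (μ : ι → ℝ) (a : ι → ι → ℂ)

lemma traceV_eq_sum_sum_traceVSummand :
    1 / 4 * (-(1 / 2) * ∑ k, ∑ ℓ, (if μ k = 0 ∨ μ ℓ = 0 then 0 else
        μ k ^ 3 * μ ℓ / (μ k ^ 2 + μ ℓ ^ 2) ^ 2 * (2 * (a k ℓ * a ℓ k).re))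
      + -(1 / 2) * ∑ k, ∑ ℓ, (if μ k = 0 ∨ μ ℓ = 0 then 0 else
        μ k ^ 2 * μ ℓ ^ 2 / (μ k ^ 2 + μ ℓ ^ 2) ^ 2 * ‖a k ℓ‖ ^ 2)
      + -(1 / 2) * ∑ k, ∑ ℓ, (if μ k = 0 ∨ μ ℓ = 0 then 0 else
        μ ℓ ^ 4 / (μ k ^ 2 + μ ℓ ^ 2) ^ 2 * ‖a k ℓ‖ ^ 2))
      = -(1 / 8) * ∑ k, ∑ ℓ, if μ k = 0 ∨ μ ℓ = 0 then 0 else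
        traceVSummand (μ k) (μ ℓ) (a k ℓ) (a ℓ k) := by
  rw [← mul_add, ← mul_add, ← mul_assoc]
  simp only [← Finset.sum_add_distrib]
  congr 1
  · norm_num
  refine Finset.sum_congr rfl fun k _ => Finset.sum_congr rfl fun ℓ _ => ?_
  split_ifs
  · simp
  · rw [traceVSummand]; ring

lemma sum_sum_traceVSummand_nonneg (hμ : ∀ k, 0 ≤ μ k) :
    0 ≤ ∑ k, ∑ ℓ, if μ k = 0 ∨ μ ℓ = 0 then 0 else
      traceVSummand (μ k) (μ ℓ) (a k ℓ) (a ℓ k) := by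
  refine sum_sum_nonneg_of_add_swap_nonneg fun k ℓ => ?_
  simp only [or_comm (a := μ ℓ = 0)]
  split_ifs
  · simp
  · exact traceVSummand_add_swap_nonneg (hμ k) (hμ ℓ) _ _

lemma sum_sum_traceVSummand_le (hμ : ∀ k, 0 ≤ μ k) :
    ∑ k, ∑ ℓ, (if μ k = 0 ∨ μ ℓ = 0 then 0 else
      traceVSummand (μ k) (μ ℓ) (a k ℓ) (a ℓ k))
      ≤ (1 + √2) / 2 * ∑ k, ∑ ℓ, if μ k = 0 ∨ μ ℓ = 0 then 0 else ‖a k ℓ‖ ^ 2 := by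
  simp_rw [Finset.mul_sum]
  refine sum_sum_le_of_add_swap_le fun k ℓ => ?_
  simp only [or_comm (a := μ ℓ = 0)]
  split_ifs
  · simp
  · rw [← mul_add]
    exact traceVSummand_add_swap_le (hμ k) (hμ ℓ) _ _

end GuardedSums

/-- The central estimate on the second-order trace contribution `Tr V` in the
approximate OSQEC bound: `0 ≥ Tr V ≥ −((1+√2)/16)⟨Ψ|Θ†Θ|Ψ⟩ ≥ −((1+√2)/16)‖Θ†Θ‖`. -/
theorem stmt_14 {dS dB : ℕ}
    (ψ : Fin dB → (Fin dS → ℂ)) (μ : Fin dB → ℝ)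
    (hμ : ∀ k, 0 ≤ μ k) (hnorm : ∑ k, μ k ^ 2 = 1)
    (hortho : ∀ k ℓ, μ k ≠ 0 → μ ℓ ≠ 0 →
      star (ψ k) ⬝ᵥ ψ ℓ = if k = ℓ then 1 else 0)
    (Θ : Matrix (Fin dS × Fin dB) (Fin dS × Fin dB) ℂ)
    (hΘ : Θᴴ = -Θ)
    (Ψ : Fin dS × Fin dB → ℂ) (hΨ : ∀ p, Ψ p = (μ p.2 : ℂ) * ψ p.2 p.1)
    (av : Fin dB → Fin dB → ℂ)
    (hav : ∀ k ℓ, av k ℓ =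
      star Ψ ⬝ᵥ Θ.mulVec (fun p => if p.2 = ℓ then ψ k p.1 else 0))
    (T1 T2 T3 TV : ℝ)
    (hT1 : T1 = -(1/2) * ∑ k, ∑ ℓ, (if μ k = 0 ∨ μ ℓ = 0 then 0 else
      μ k ^ 3 * μ ℓ / (μ k ^ 2 + μ ℓ ^ 2) ^ 2 * (2 * (av k ℓ * av ℓ k).re)))
    (hT2 : T2 = -(1/2) * ∑ k, ∑ ℓ, (if μ k = 0 ∨ μ ℓ = 0 then 0 else
      μ k ^ 2 * μ ℓ ^ 2 / (μ k ^ 2 + μ ℓ ^ 2) ^ 2 * ‖av k ℓ‖ ^ 2))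
    (hT3 : T3 = -(1/2) * ∑ k, ∑ ℓ, (if μ k = 0 ∨ μ ℓ = 0 then 0 else
      μ ℓ ^ 4 / (μ k ^ 2 + μ ℓ ^ 2) ^ 2 * ‖av k ℓ‖ ^ 2))
    (hTV : TV = (1/4) * (T1 + T2 + T3)) :
    TV ≤ 0 ∧
    -((1 + Real.sqrt 2) / 16) * (star Ψ ⬝ᵥ (Θᴴ * Θ).mulVec Ψ).re ≤ TV ∧
    (star Ψ ⬝ᵥ (Θᴴ * Θ).mulVec Ψ).re
      ≤ ‖Matrix.toEuclideanCLM (𝕜 := ℂ) (Θᴴ * Θ)‖ := by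
  rw [hT1, hT2, hT3, traceV_eq_sum_sum_traceVSummand] at hTV
  have hQ : (star Ψ ⬝ᵥ (Θᴴ * Θ) *ᵥ Ψ).re = ∑ p, ‖(Θᴴ *ᵥ Ψ) p‖ ^ 2 := by
    simpa [hΘ, neg_mulVec] using re_star_dotProduct_conjTranspose_mul_mulVec Θ Ψ
  have hA : ∑ k, ∑ ℓ, (if μ k = 0 ∨ μ ℓ = 0 then 0 else ‖av k ℓ‖ ^ 2)
      ≤ (star Ψ ⬝ᵥ (Θᴴ * Θ) *ᵥ Ψ).re := by
    rw [hQ, Finset.sum_comm]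
    refine le_trans ?_ (sum_sum_norm_sq_dotProduct_tensor_le ψ
      {k | μ k ≠ 0} (fun j hj k hk => hortho j k (by simpa using hj) (by simpa using hk)) _)
    gcongr with ℓ
    rw [Finset.sum_filter]
    gcongr with k
    rw [hav, dotProduct_mulVec, star_mulVec, conjTranspose_conjTranspose]
    split_ifs <;> first | positivity | exact le_rfl | tauto
  have hΨnorm : ∑ p, ‖Ψ p‖ ^ 2 = 1 := by
    simp_rw [hΨ]
    exact sum_norm_sq_schmidt ψ μ hnorm fun k hk => by simpa using hortho k k hk hk
  have hnonneg := sum_sum_traceVSummand_nonneg μ av hμ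
  have hle := sum_sum_traceVSummand_le μ av hμ
  refine ⟨by linarith, by nlinarith [Real.sqrt_nonneg 2], ?_⟩
  simpa [hΨnorm] using re_star_dotProduct_mulVec_le (Θᴴ * Θ) Ψ
end
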